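/- arXiv:2209.11543 — 3 statements merged into one kernel-verified Lean document; each statement's English description precedes it below -/
import Mathlib

section
/- Let A be a braided Hopf algebra in Yetter–Drinfeld modules over H, K ⊆ A a left coideal subalgebra in left H-comodules, and U a left A-comodule in the category of left H-comodules. Then U ⊗ K, equipped with the diagonal left H-coaction, the half-braided diagonal left A-coaction δ(u ⊗ k) = u⁽⁻¹⁾(u⁽⁰⁾₍₋₁₎ · k⁽¹⁾) ⊗ u⁽⁰⁾₍₀₎ ⊗ k⁽²⁾, and the right K-action by multiplication on the second tensor factor, is a Hopf module in the category of left H-comodules: the A-coaction is right K-linear with respect to the half-braided diagonal K-action on A ⊗ (U ⊗ K). -/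
open TensorProduct LinearMap

universe u
set_option maxHeartbeats 1000000

section Prelude

variable (k : Type u) [Field k]

/-- A left comodule structure map over a coalgebra-like datum `(Δ, ε)` on `C`. -/
structure IsComod {C V : Type u} [AddCommGroup C] [Module k C]
    [AddCommGroup V] [Module k V]
    (ρ : V →ₗ[k] C ⊗[k] V) (Δ : C →ₗ[k] C ⊗[k] C) (ε : C →ₗ[k] k) : Prop where
  counit : (TensorProduct.lid k V).toLinearMap ∘ₗ ε.rTensor V ∘ₗ ρ = LinearMap.id
  coassoc : Δ.rTensor V ∘ₗ ρ
      = (TensorProduct.assoc k C C V).symm.toLinearMap ∘ₗ ρ.lTensor C ∘ₗ ρ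

/-- A right comodule structure map. -/
structure IsRightComod {C V : Type u} [AddCommGroup C] [Module k C]
    [AddCommGroup V] [Module k V]
    (ρ : V →ₗ[k] V ⊗[k] C) (Δ : C →ₗ[k] C ⊗[k] C) (ε : C →ₗ[k] k) : Prop where
  counit : (TensorProduct.rid k V).toLinearMap ∘ₗ ε.lTensor V ∘ₗ ρ = LinearMap.id
  coassoc : Δ.lTensor V ∘ₗ ρ
      = (TensorProduct.assoc k V C C).toLinearMap ∘ₗ ρ.rTensor C ∘ₗ ρ

/-- A right module structure map over an algebra-like datum `(μ, 1)` on `B`. -/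
structure IsRightMod {B V : Type u} [AddCommGroup B] [Module k B]
    [AddCommGroup V] [Module k V]
    (σ : V ⊗[k] B →ₗ[k] V) (μ : B ⊗[k] B →ₗ[k] B) (oneB : B) : Prop where
  act_one : ∀ v : V, σ (v ⊗ₜ oneB) = v
  act_assoc : σ ∘ₗ σ.rTensor B
      = σ ∘ₗ μ.lTensor V ∘ₗ (TensorProduct.assoc k V B B).toLinearMap

/-- Diagonal left `H`-coaction on a tensor product of two `H`-comodules. -/
noncomputable def diagCoact {H V W : Type u} [Ring H] [Algebra k H]
    [AddCommGroup V] [Module k V] [AddCommGroup W] [Module k W]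
    (ρV : V →ₗ[k] H ⊗[k] V) (ρW : W →ₗ[k] H ⊗[k] W) :
    V ⊗[k] W →ₗ[k] H ⊗[k] (V ⊗[k] W) :=
  (LinearMap.mul' k H).rTensor (V ⊗[k] W)
    ∘ₗ (tensorTensorTensorComm k H V H W).toLinearMap ∘ₗ map ρV ρW

/-- A braided Hopf algebra `A` in the Yetter–Drinfeld category over the Hopf algebra `H`,
with all structure maps given explicitly as linear maps. -/
structure BHA (H : Type u) [Ring H] [HopfAlgebra k H]
    (A : Type u) [AddCommGroup A] [Module k A] where
  mul : A ⊗[k] A →ₗ[k] A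
  one : A
  comul : A →ₗ[k] A ⊗[k] A
  counit : A →ₗ[k] k
  antipode : A →ₗ[k] A
  coact : A →ₗ[k] H ⊗[k] A
  act : H ⊗[k] A →ₗ[k] A
  -- algebra axioms
  mul_assoc' : mul ∘ₗ mul.rTensor A
      = mul ∘ₗ mul.lTensor A ∘ₗ (TensorProduct.assoc k A A A).toLinearMap
  one_mul' : ∀ a : A, mul (one ⊗ₜ a) = a
  mul_one' : ∀ a : A, mul (a ⊗ₜ one) = a
  -- coalgebra axioms
  isCoalg : IsComod k comul comul counit  -- encodes coassociativity and left counit axiom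
  comul_counit : (TensorProduct.rid k A).toLinearMap ∘ₗ counit.lTensor A ∘ₗ comul
      = LinearMap.id
  -- `H`-comodule axioms
  isComodH : IsComod k coact (Coalgebra.comul (R := k) (A := H)) (Coalgebra.counit (R := k) (A := H))
  -- `H`-module axioms
  act_one' : ∀ a : A, act ((1 : H) ⊗ₜ a) = a
  act_mul' : ∀ (g h : H) (a : A), act ((g * h) ⊗ₜ a) = act (g ⊗ₜ act (h ⊗ₜ a))
  -- `A` is an `H`-module algebra
  act_alg : act ∘ₗ mul.lTensor H
      = mul ∘ₗ map act act ∘ₗ (tensorTensorTensorComm k H H A A).toLinearMap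
          ∘ₗ (Coalgebra.comul (R := k) (A := H)).rTensor (A ⊗[k] A)
  act_unit : ∀ h : H, act (h ⊗ₜ one) = Coalgebra.counit (R := k) h • one
  -- `A` is an `H`-comodule algebra
  coact_mul : coact ∘ₗ mul = mul.lTensor H ∘ₗ diagCoact k coact coact
  coact_one : coact one = 1 ⊗ₜ one
  -- Yetter–Drinfeld compatibility: h⁽¹⁾a₍₋₁₎ ⊗ h⁽²⁾·a₍₀₎ = (h⁽¹⁾·a)₍₋₁₎h⁽²⁾ ⊗ (h⁽¹⁾·a)₍₀₎
  yd : map (LinearMap.mul' k H) act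
        ∘ₗ (tensorTensorTensorComm k H H H A).toLinearMap
        ∘ₗ coact.lTensor (H ⊗[k] H)
        ∘ₗ (Coalgebra.comul (R := k) (A := H)).rTensor A
      = (LinearMap.mul' k H).rTensor A
        ∘ₗ (TensorProduct.assoc k H H A).symm.toLinearMap
        ∘ₗ (TensorProduct.comm k A H).toLinearMap.lTensor H
        ∘ₗ (TensorProduct.assoc k H A H).toLinearMap
        ∘ₗ (coact ∘ₗ act).rTensor H
        ∘ₗ (TensorProduct.assoc k H A H).symm.toLinearMap
        ∘ₗ (TensorProduct.comm k H A).toLinearMap.lTensor H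
        ∘ₗ (TensorProduct.assoc k H H A).toLinearMap
        ∘ₗ (Coalgebra.comul (R := k) (A := H)).rTensor A
  -- the braiding of the Yetter–Drinfeld category on `A ⊗ A`
  braid : A ⊗[k] A →ₗ[k] A ⊗[k] A
  braid_def : braid = act.rTensor A
      ∘ₗ (TensorProduct.assoc k H A A).symm.toLinearMap
      ∘ₗ (TensorProduct.comm k A A).toLinearMap.lTensor H
      ∘ₗ (TensorProduct.assoc k H A A).toLinearMap
      ∘ₗ coact.rTensor A
  -- the braided algebra structure on `A ⊗ A`
  mulAA : (A ⊗[k] A) ⊗[k] (A ⊗[k] A) →ₗ[k] A ⊗[k] A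
  mulAA_def : mulAA = map mul mul
      ∘ₗ (TensorProduct.assoc k A A (A ⊗[k] A)).symm.toLinearMap
      ∘ₗ ((TensorProduct.assoc k A A A).toLinearMap
            ∘ₗ braid.rTensor A
            ∘ₗ (TensorProduct.assoc k A A A).symm.toLinearMap).lTensor A
      ∘ₗ (TensorProduct.assoc k A A (A ⊗[k] A)).toLinearMap
  -- braided bialgebra axioms
  comul_mul : comul ∘ₗ mul = mulAA ∘ₗ map comul comul
  counit_mul : ∀ x y : A, counit (mul (x ⊗ₜ y)) = counit x * counit y
  comul_one : comul one = one ⊗ₜ one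
  counit_one : counit one = 1
  -- antipode axioms
  antipode_left : ∀ a : A, mul (antipode.rTensor A (comul a)) = counit a • one
  antipode_right : ∀ a : A, mul (antipode.lTensor A (comul a)) = counit a • one
  -- the comultiplication and counit of `A` are `H`-colinear
  comul_colinear : diagCoact k coact coact ∘ₗ comul = comul.lTensor H ∘ₗ coact
  counit_colinear : ∀ a : A, counit.lTensor H (coact a) = counit a • ((1 : H) ⊗ₜ (1 : k))

namespace BHA

variable {k} {H A : Type u} [Ring H] [HopfAlgebra k H]
  [AddCommGroup A] [Module k A]

/-- Group-like elements of `A`. -/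
def IsGroupLike (S : BHA k H A) (g : A) : Prop :=
  S.comul g = g ⊗ₜ g ∧ S.counit g = 1

/-- `C` is a subcoalgebra of `A`. -/
def IsSubcoalgebra (S : BHA k H A) (C : Submodule k A) : Prop :=
  ∀ c ∈ C, S.comul c ∈ LinearMap.range (map C.subtype C.subtype)

/-- `C` is a simple subcoalgebra of `A`. -/
def IsSimpleSubcoalgebra (S : BHA k H A) (C : Submodule k A) : Prop :=
  S.IsSubcoalgebra C ∧ C ≠ ⊥ ∧
    ∀ D : Submodule k A, S.IsSubcoalgebra D → D ≤ C → D ≠ ⊥ → D = C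

/-- `A` is pointed: all its simple subcoalgebras are one-dimensional. -/
def IsPointed (S : BHA k H A) : Prop :=
  ∀ C : Submodule k A, S.IsSimpleSubcoalgebra C → Module.finrank k C = 1

/-- `K` is a left coideal subalgebra of `A` in the category of left `H`-comodules. -/
def IsLeftCoidealSubalgebra (S : BHA k H A) (K : Submodule k A) : Prop :=
  S.one ∈ K ∧ (∀ x ∈ K, ∀ y ∈ K, S.mul (x ⊗ₜ y) ∈ K) ∧
    (∀ x ∈ K, S.comul x ∈ LinearMap.range (K.subtype.lTensor A)) ∧
    (∀ x ∈ K, S.coact x ∈ LinearMap.range (K.subtype.lTensor H))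

end BHA

end Prelude
section Prelude2

variable (k : Type u) [Field k]

/-- `W` is a subcomodule for the coaction `ρ`. -/
def IsSubcomod {C V : Type u} [AddCommGroup C] [Module k C] [AddCommGroup V] [Module k V]
    (ρ : V →ₗ[k] C ⊗[k] V) (W : Submodule k V) : Prop :=
  ∀ w ∈ W, ρ w ∈ LinearMap.range (W.subtype.lTensor C)

/-- A coalgebra-datum `(Δ, ε)` is cosemisimple if every subcomodule of every comodule
admits a complementary subcomodule. -/
def CosemisimpleCoalg {C : Type u} [AddCommGroup C] [Module k C]
    (Δ : C →ₗ[k] C ⊗[k] C) (ε : C →ₗ[k] k) : Prop :=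
  ∀ (V : Type u) [AddCommGroup V] [Module k V] (ρ : V →ₗ[k] C ⊗[k] V),
    IsComod k ρ Δ ε → ∀ W : Submodule k V, IsSubcomod k ρ W →
      ∃ W' : Submodule k V, IsCompl W W' ∧ IsSubcomod k ρ W'

/-- The half-braided diagonal right action of `K'` on `A ⊗ X`:
`(a ⊗ x) · c = a (x₍₋₁₎ · c⁽¹⁾) ⊗ x₍₀₎ · c⁽²⁾`. -/
noncomputable def halfBraidedAction {H A X K' : Type u} [Ring H] [Algebra k H]
    [AddCommGroup A] [Module k A] [AddCommGroup X] [Module k X]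
    [AddCommGroup K'] [Module k K']
    (mulA : A ⊗[k] A →ₗ[k] A) (act : H ⊗[k] A →ₗ[k] A)
    (ρX : X →ₗ[k] H ⊗[k] X) (σX : X ⊗[k] K' →ₗ[k] X)
    (comulK : K' →ₗ[k] A ⊗[k] K') :
    (A ⊗[k] X) ⊗[k] K' →ₗ[k] A ⊗[k] X :=
  map (mulA ∘ₗ act.lTensor A ∘ₗ (TensorProduct.assoc k A H A).toLinearMap) σX
    ∘ₗ (tensorTensorTensorComm k (A ⊗[k] H) X A K').toLinearMap
    ∘ₗ ((TensorProduct.assoc k A H X).symm.toLinearMap ∘ₗ ρX.lTensor A).rTensor (A ⊗[k] K')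
    ∘ₗ comulK.lTensor (A ⊗[k] X)

/-- The half-braided diagonal left `A`-coaction on `U ⊗ K'`:
`u ⊗ c ↦ u⁽⁻¹⁾ (u⁽⁰⁾₍₋₁₎ · c⁽¹⁾) ⊗ u⁽⁰⁾₍₀₎ ⊗ c⁽²⁾`. -/
noncomputable def halfBraidedCoact {H A U K' : Type u} [Ring H] [Algebra k H]
    [AddCommGroup A] [Module k A] [AddCommGroup U] [Module k U]
    [AddCommGroup K'] [Module k K']
    (mulA : A ⊗[k] A →ₗ[k] A) (act : H ⊗[k] A →ₗ[k] A)
    (ρAU : U →ₗ[k] A ⊗[k] U) (ρHU : U →ₗ[k] H ⊗[k] U)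
    (comulK : K' →ₗ[k] A ⊗[k] K') :
    U ⊗[k] K' →ₗ[k] A ⊗[k] (U ⊗[k] K') :=
  map (mulA ∘ₗ act.lTensor A ∘ₗ (TensorProduct.assoc k A H A).toLinearMap) LinearMap.id
    ∘ₗ (tensorTensorTensorComm k (A ⊗[k] H) U A K').toLinearMap
    ∘ₗ ((TensorProduct.assoc k A H U).symm.toLinearMap ∘ₗ ρHU.lTensor A).rTensor (A ⊗[k] K')
    ∘ₗ map ρAU comulK

namespace BHA

variable {k} {H A : Type u} [Ring H] [HopfAlgebra k H] [AddCommGroup A] [Module k A]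

/-- `comulK` is the restriction of the comultiplication of `A` to the left coideal `K`. -/
def RestrictsComul (S : BHA k H A) (K : Submodule k A)
    (comulK : ↥K →ₗ[k] A ⊗[k] ↥K) : Prop :=
  K.subtype.lTensor A ∘ₗ comulK = S.comul ∘ₗ K.subtype

/-- `coactK` is the restriction of the `H`-coaction of `A` to `K`. -/
def RestrictsCoact (S : BHA k H A) (K : Submodule k A)
    (coactK : ↥K →ₗ[k] H ⊗[k] ↥K) : Prop :=
  K.subtype.lTensor H ∘ₗ coactK = S.coact ∘ₗ K.subtype

/-- `mulK` is the restriction of the multiplication of `A` to the subalgebra `K`. -/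
def RestrictsMul (S : BHA k H A) (K : Submodule k A)
    (mulK : ↥K ⊗[k] ↥K →ₗ[k] ↥K) : Prop :=
  K.subtype ∘ₗ mulK = S.mul ∘ₗ map K.subtype K.subtype

variable (S : BHA k H A) (K : Submodule k A)

/-- A (left-right) Hopf module in `^A(^H 𝓜)_K`: a left `H`-comodule `V` with a
left `A`-coaction and a right `K`-action, all `H`-colinear, such that the `A`-coaction
is right `K`-linear for the half-braided diagonal `K`-action on `A ⊗ V`. -/
structure IsHopfModule (mulK : ↥K ⊗[k] ↥K →ₗ[k] ↥K) (oneK : ↥K)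
    (comulK : ↥K →ₗ[k] A ⊗[k] ↥K) (coactK : ↥K →ₗ[k] H ⊗[k] ↥K)
    {V : Type u} [AddCommGroup V] [Module k V]
    (ρH : V →ₗ[k] H ⊗[k] V) (ρA : V →ₗ[k] A ⊗[k] V)
    (σ : V ⊗[k] ↥K →ₗ[k] V) : Prop where
  comodH : IsComod k ρH (Coalgebra.comul (R := k) (A := H)) (Coalgebra.counit (R := k) (A := H))
  comodA : IsComod k ρA S.comul S.counit
  modK : IsRightMod k σ mulK oneK
  colinearA : diagCoact k S.coact ρH ∘ₗ ρA = ρA.lTensor H ∘ₗ ρH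
  colinearK : ρH ∘ₗ σ = σ.lTensor H ∘ₗ diagCoact k ρH coactK
  Klinear : ρA ∘ₗ σ = halfBraidedAction k S.mul S.act ρH σ comulK ∘ₗ ρA.rTensor ↥K

/-- `V` (with right `K`-action `σ` and `H`-coaction `ρH`) is `K`-free in the category of
left `H`-comodules: it is freely generated as a `K`-module by an `H`-subcomodule. -/
def IsKFree {V : Type u} [AddCommGroup V] [Module k V]
    (ρH : V →ₗ[k] H ⊗[k] V) (σ : V ⊗[k] ↥K →ₗ[k] V) : Prop :=
  ∃ X : Submodule k V, IsSubcomod k ρH X ∧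
    Function.Bijective (σ ∘ₗ X.subtype.rTensor ↥K)

end BHA

end Prelude2


/-! For an `H`-comodule `X`, `A` acts on `A ⊗ X` from the right by
`(a ⊗ x) · b = a (x₍₋₁₎ · b) ⊗ x₍₀₎`. Both structures in the statement are built from it:
`δ(u ⊗ c) = (δ_A u) · c⁽¹⁾ ⊗ c⁽²⁾`, and `(a ⊗ v) · c = ((a ⊗ v) · c⁽¹⁾) c⁽²⁾` with `v ∈ U ⊗ K`
coacting diagonally; likewise `Δ(x y) = ((x⁽¹⁾ ⊗ x⁽²⁾) · y⁽¹⁾) y⁽²⁾`.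
It is an action, `(m · b) · b' = m · (b b')`, because `A` is an `H`-module algebra and the
coaction on `X` is coassociative, and on a diagonal comodule it splits as
`(m ⊗ z) · b = m · (z₍₋₁₎ · b) ⊗ z₍₀₎`. With these facts both sides of the `K`-linearity
identity at `u ⊗ x ⊗ y` become `(δ_A u · x⁽¹⁾) · (x⁽²⁾₍₋₁₎ · y⁽¹⁾) ⊗ x⁽²⁾₍₀₎ y⁽²⁾`.
A coideal subalgebra `K` reduces to `K = A`: all its structure maps are restrictions, and
`A ⊗ U ⊗ K → A ⊗ U ⊗ A` is injective over a field. -/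

namespace BHA

variable {k H A : Type u} [Field k] [Ring H] [HopfAlgebra k H] [AddCommGroup A] [Module k A]
  (S : BHA k H A)

theorem mul_assoc_apply (a b c : A) :
    S.mul (S.mul (a ⊗ₜ b) ⊗ₜ c) = S.mul (a ⊗ₜ S.mul (b ⊗ₜ c)) := by
  simpa using LinearMap.congr_fun S.mul_assoc' ((a ⊗ₜ b) ⊗ₜ c)

theorem act_mul_apply (h : H) (a b : A) :
    S.act (h ⊗ₜ S.mul (a ⊗ₜ b))
      = (S.mul ∘ₗ map (S.act ∘ₗ (TensorProduct.mk k H A).flip a)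
          (S.act ∘ₗ (TensorProduct.mk k H A).flip b)) (Coalgebra.comul (R := k) h) := by
  have h_alg := LinearMap.congr_fun S.act_alg (h ⊗ₜ (a ⊗ₜ b))
  simp only [comp_apply, lTensor_tmul, rTensor_tmul, LinearEquiv.coe_coe] at h_alg
  rw [h_alg]
  induction Coalgebra.comul (R := k) h with
  | zero => simp
  | add _ _ h₁ h₂ => simp only [add_tmul, map_add, h₁, h₂]
  | tmul g g' => simp

end BHA

section BraidedMulRight

variable {k H A : Type u} [Field k] [Ring H] [Algebra k H] [AddCommGroup A] [Module k A]
  (mulA : A ⊗[k] A →ₗ[k] A) (act : H ⊗[k] A →ₗ[k] A)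

/-- `(a ⊗ x) · b = a (x₍₋₁₎ · b) ⊗ x₍₀₎`. -/
noncomputable def braidedMulRight {X : Type u} [AddCommGroup X] [Module k X]
    (ρX : X →ₗ[k] H ⊗[k] X) : (A ⊗[k] X) ⊗[k] A →ₗ[k] A ⊗[k] X :=
  (mulA ∘ₗ act.lTensor A ∘ₗ (TensorProduct.assoc k A H A).toLinearMap).rTensor X
    ∘ₗ (TensorProduct.rightComm k (A ⊗[k] H) X A).toLinearMap
    ∘ₗ ((TensorProduct.assoc k A H X).symm.toLinearMap ∘ₗ ρX.lTensor A).rTensor A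

theorem braidedMulRight_tmul {X : Type u} [AddCommGroup X] [Module k X]
    (ρX : X →ₗ[k] H ⊗[k] X) (a : A) (x : X) (b : A) :
    braidedMulRight mulA act ρX ((a ⊗ₜ x) ⊗ₜ b)
      = (mulA ∘ₗ TensorProduct.mk k A A a ∘ₗ act ∘ₗ (TensorProduct.mk k H A).flip b).rTensor X
          (ρX x) := by
  simp only [braidedMulRight, comp_apply, rTensor_tmul, lTensor_tmul, LinearEquiv.coe_coe]
  induction ρX x with
  | zero => simp
  | add _ _ h₁ h₂ => simp only [tmul_add, add_tmul, map_add, h₁, h₂]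
  | tmul h x₀ => simp

theorem braidedMulRight_natural {X₁ X₂ : Type u} [AddCommGroup X₁] [Module k X₁]
    [AddCommGroup X₂] [Module k X₂] {g : X₁ →ₗ[k] X₂} {ρ₁ : X₁ →ₗ[k] H ⊗[k] X₁}
    {ρ₂ : X₂ →ₗ[k] H ⊗[k] X₂} (hg : g.lTensor H ∘ₗ ρ₁ = ρ₂ ∘ₗ g) (m : A ⊗[k] X₁) (b : A) :
    braidedMulRight mulA act ρ₂ (g.lTensor A m ⊗ₜ b)
      = g.lTensor A (braidedMulRight mulA act ρ₁ (m ⊗ₜ b)) := by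
  induction m with
  | zero => simp
  | add _ _ h₁ h₂ => simp only [add_tmul, map_add, h₁, h₂]
  | tmul a x =>
    have hx : ρ₂ (g x) = g.lTensor H (ρ₁ x) := (LinearMap.congr_fun hg x).symm
    simp only [lTensor_tmul, braidedMulRight_tmul, hx]
    induction ρ₁ x with
    | zero => simp
    | add _ _ h₁ h₂ => simp only [map_add, h₁, h₂]
    | tmul h x₀ => simp

end BraidedMulRight

section BraidedMulRightAssoc

variable {k H A X : Type u} [Field k] [Ring H] [HopfAlgebra k H] [AddCommGroup A] [Module k A]
  [AddCommGroup X] [Module k X] (S : BHA k H A)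

theorem braidedMulRight_mul {ρX : X →ₗ[k] H ⊗[k] X}
    (hρX : (Coalgebra.comul (R := k) (A := H)).rTensor X ∘ₗ ρX
      = (TensorProduct.assoc k H H X).symm.toLinearMap ∘ₗ ρX.lTensor H ∘ₗ ρX)
    (m : A ⊗[k] X) (b b' : A) :
    braidedMulRight S.mul S.act ρX (braidedMulRight S.mul S.act ρX (m ⊗ₜ b) ⊗ₜ b')
      = braidedMulRight S.mul S.act ρX (m ⊗ₜ S.mul (b ⊗ₜ b')) := by
  induction m with
  | zero => simp
  | add _ _ h₁ h₂ => simp only [add_tmul, map_add, h₁, h₂]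
  | tmul a x =>
    -- both sides are `Λ` applied to one of the two sides of coassociativity at `x`
    let Λ : (H ⊗[k] H) ⊗[k] X →ₗ[k] A ⊗[k] X :=
      (S.mul ∘ₗ map (S.mul ∘ₗ TensorProduct.mk k A A a ∘ₗ S.act ∘ₗ (TensorProduct.mk k H A).flip b)
        (S.act ∘ₗ (TensorProduct.mk k H A).flip b')).rTensor X
    have h_left :
        braidedMulRight S.mul S.act ρX (braidedMulRight S.mul S.act ρX ((a ⊗ₜ x) ⊗ₜ b) ⊗ₜ b')
          = Λ ((TensorProduct.assoc k H H X).symm (ρX.lTensor H (ρX x))) := by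
      rw [braidedMulRight_tmul]
      induction ρX x with
      | zero => simp
      | add _ _ h₁ h₂ => simp only [add_tmul, map_add, h₁, h₂]
      | tmul h w =>
        simp only [rTensor_tmul, lTensor_tmul, comp_apply, braidedMulRight_tmul]
        induction ρX w with
        | zero => simp
        | add _ _ h₁ h₂ => simp only [tmul_add, map_add, h₁, h₂]
        | tmul g w₀ => simp [Λ]
    have h_right : braidedMulRight S.mul S.act ρX ((a ⊗ₜ x) ⊗ₜ S.mul (b ⊗ₜ b'))
        = Λ ((Coalgebra.comul (R := k) (A := H)).rTensor X (ρX x)) := by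
      rw [braidedMulRight_tmul]
      induction ρX x with
      | zero => simp
      | add _ _ h₁ h₂ => simp only [map_add, h₁, h₂]
      | tmul h w =>
        simp only [rTensor_tmul, comp_apply, mk_apply, flip_apply, S.act_mul_apply]
        induction Coalgebra.comul (R := k) h with
        | zero => simp
        | add _ _ h₁ h₂ => simp only [map_add, tmul_add, add_tmul, h₁, h₂]
        | tmul g g' => simp [Λ, S.mul_assoc_apply]
    rw [h_left, h_right, ← LinearMap.comp_apply (M₃ := (H ⊗[k] H) ⊗[k] X), hρX]
    rfl

theorem braidedMulRight_diagCoact {Y : Type u} [AddCommGroup Y] [Module k Y]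
    (ρX : X →ₗ[k] H ⊗[k] X) (ρY : Y →ₗ[k] H ⊗[k] Y) (m : A ⊗[k] X) (y : Y) (b : A) :
    braidedMulRight S.mul S.act (diagCoact k ρX ρY) (TensorProduct.assoc k A X Y (m ⊗ₜ y) ⊗ₜ b)
      = TensorProduct.assoc k A X Y ((braidedMulRight S.mul S.act ρX ∘ₗ TensorProduct.mk k _ A m
          ∘ₗ S.act ∘ₗ (TensorProduct.mk k H A).flip b).rTensor Y (ρY y)) := by
  induction m with
  | zero => simp
  | add _ _ h₁ h₂ =>
    simp only [add_tmul, map_add, h₁, h₂, comp_add, add_comp, rTensor_add, LinearMap.add_apply]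
  | tmul a x =>
    simp only [TensorProduct.assoc_tmul, braidedMulRight_tmul, diagCoact, comp_apply, map_tmul]
    induction ρY y with
    | zero => simp
    | add _ _ h₁ h₂ => simp only [tmul_add, map_add, h₁, h₂]
    | tmul h y₀ =>
      simp only [rTensor_tmul, comp_apply, mk_apply, flip_apply, braidedMulRight_tmul]
      induction ρX x with
      | zero => simp
      | add _ _ h₁ h₂ => simp only [add_tmul, map_add, h₁, h₂]
      | tmul g x₀ => simp [S.act_mul']

end BraidedMulRightAssoc

theorem BHA.comul_mul_apply {k H A : Type u} [Field k] [Ring H] [HopfAlgebra k H]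
    [AddCommGroup A] [Module k A] (S : BHA k H A) (x y : A) :
    S.comul (S.mul (x ⊗ₜ y)) = S.mul.lTensor A (TensorProduct.assoc k A A A
      ((braidedMulRight S.mul S.act S.coact).rTensor A
        ((TensorProduct.assoc k (A ⊗[k] A) A A).symm (S.comul x ⊗ₜ S.comul y)))) := by
  have h_comul := LinearMap.congr_fun S.comul_mul (x ⊗ₜ y)
  simp only [comp_apply, map_tmul] at h_comul
  rw [h_comul, S.mulAA_def, S.braid_def]
  induction S.comul x with
  | zero => simp
  | add _ _ h₁ h₂ => simp only [add_tmul, map_add, h₁, h₂]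
  | tmul x₁ x₂ =>
    induction S.comul y with
    | zero => simp
    | add _ _ h₁ h₂ => simp only [tmul_add, map_add, h₁, h₂]
    | tmul y₁ y₂ =>
      simp only [comp_apply, LinearEquiv.coe_coe, TensorProduct.assoc_tmul,
        TensorProduct.assoc_symm_tmul, lTensor_tmul, rTensor_tmul, braidedMulRight_tmul]
      induction S.coact x₂ with
      | zero => simp
      | add _ _ h₁ h₂ => simp only [tmul_add, add_tmul, map_add, h₁, h₂]
      | tmul h z => simp

section HalfBraided

variable {k H A : Type u} [Field k] [Ring H] [Algebra k H] [AddCommGroup A] [Module k A]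
  (mulA : A ⊗[k] A →ₗ[k] A) (act : H ⊗[k] A →ₗ[k] A)

theorem halfBraidedCoact_apply {U K' : Type u} [AddCommGroup U] [Module k U]
    [AddCommGroup K'] [Module k K'] (ρAU : U →ₗ[k] A ⊗[k] U) (ρHU : U →ₗ[k] H ⊗[k] U)
    (comulK : K' →ₗ[k] A ⊗[k] K') (u : U) (c : K') :
    halfBraidedCoact k mulA act ρAU ρHU comulK (u ⊗ₜ c)
      = TensorProduct.assoc k A U K' ((braidedMulRight mulA act ρHU).rTensor K'
          ((TensorProduct.assoc k (A ⊗[k] U) A K').symm (ρAU u ⊗ₜ comulK c))) := by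
  simp only [halfBraidedCoact, comp_apply, map_tmul]
  induction ρAU u with
  | zero => simp
  | add _ _ h₁ h₂ => simp only [add_tmul, map_add, h₁, h₂]
  | tmul a u' =>
    induction comulK c with
    | zero => simp
    | add _ _ h₁ h₂ => simp only [tmul_add, map_add, h₁, h₂]
    | tmul b c₀ =>
      simp only [rTensor_tmul, comp_apply, lTensor_tmul, TensorProduct.assoc_symm_tmul,
        braidedMulRight_tmul]
      induction ρHU u' with
      | zero => simp
      | add _ _ h₁ h₂ => simp only [tmul_add, add_tmul, map_add, h₁, h₂]
      | tmul h w => simp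

theorem halfBraidedAction_apply {X K' : Type u} [AddCommGroup X] [Module k X]
    [AddCommGroup K'] [Module k K'] (ρX : X →ₗ[k] H ⊗[k] X) (σX : X ⊗[k] K' →ₗ[k] X)
    (comulK : K' →ₗ[k] A ⊗[k] K') (m : A ⊗[k] X) (c : K') :
    halfBraidedAction k mulA act ρX σX comulK (m ⊗ₜ c)
      = σX.lTensor A (TensorProduct.assoc k A X K' ((braidedMulRight mulA act ρX).rTensor K'
          ((TensorProduct.assoc k (A ⊗[k] X) A K').symm (m ⊗ₜ comulK c)))) := by
  simp only [halfBraidedAction, comp_apply, lTensor_tmul]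
  induction m with
  | zero => simp
  | add _ _ h₁ h₂ => simp only [add_tmul, map_add, h₁, h₂]
  | tmul a x =>
    induction comulK c with
    | zero => simp
    | add _ _ h₁ h₂ => simp only [tmul_add, map_add, h₁, h₂]
    | tmul b c₀ =>
      simp only [rTensor_tmul, comp_apply, lTensor_tmul, TensorProduct.assoc_symm_tmul,
        braidedMulRight_tmul]
      induction ρX x with
      | zero => simp
      | add _ _ h₁ h₂ => simp only [tmul_add, add_tmul, map_add, h₁, h₂]
      | tmul h w => simp

theorem diagCoact_comp_lTensor {V W₁ W₂ : Type u} [AddCommGroup V] [Module k V]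
    [AddCommGroup W₁] [Module k W₁] [AddCommGroup W₂] [Module k W₂] (ρV : V →ₗ[k] H ⊗[k] V)
    {f : W₁ →ₗ[k] W₂} {ρ₁ : W₁ →ₗ[k] H ⊗[k] W₁} {ρ₂ : W₂ →ₗ[k] H ⊗[k] W₂}
    (hf : f.lTensor H ∘ₗ ρ₁ = ρ₂ ∘ₗ f) :
    (f.lTensor V).lTensor H ∘ₗ diagCoact k ρV ρ₁ = diagCoact k ρV ρ₂ ∘ₗ f.lTensor V := by
  refine TensorProduct.ext' fun v w => ?_
  have hw : ρ₂ (f w) = f.lTensor H (ρ₁ w) := (LinearMap.congr_fun hf w).symm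
  simp only [diagCoact, comp_apply, lTensor_tmul, map_tmul, hw]
  induction ρV v with
  | zero => simp
  | add _ _ h₁ h₂ => simp only [add_tmul, map_add, h₁, h₂]
  | tmul h v₀ =>
    induction ρ₁ w with
    | zero => simp
    | add _ _ h₁ h₂ => simp only [tmul_add, map_add, h₁, h₂]
    | tmul g w₀ => simp

theorem halfBraidedCoact_natural {U K₁ K₂ : Type u} [AddCommGroup U] [Module k U]
    [AddCommGroup K₁] [Module k K₁] [AddCommGroup K₂] [Module k K₂]
    (ρAU : U →ₗ[k] A ⊗[k] U) (ρHU : U →ₗ[k] H ⊗[k] U)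
    {f : K₁ →ₗ[k] K₂} {comul₁ : K₁ →ₗ[k] A ⊗[k] K₁} {comul₂ : K₂ →ₗ[k] A ⊗[k] K₂}
    (hf : f.lTensor A ∘ₗ comul₁ = comul₂ ∘ₗ f) :
    (f.lTensor U).lTensor A ∘ₗ halfBraidedCoact k mulA act ρAU ρHU comul₁
      = halfBraidedCoact k mulA act ρAU ρHU comul₂ ∘ₗ f.lTensor U := by
  refine TensorProduct.ext' fun u c => ?_
  have hc : comul₂ (f c) = f.lTensor A (comul₁ c) := (LinearMap.congr_fun hf c).symm
  simp only [comp_apply, lTensor_tmul, halfBraidedCoact_apply, hc]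
  induction comul₁ c with
  | zero => simp
  | add _ _ h₁ h₂ => simp only [tmul_add, map_add, h₁, h₂]
  | tmul b c₀ =>
    simp only [lTensor_tmul, TensorProduct.assoc_symm_tmul, rTensor_tmul]
    induction braidedMulRight mulA act ρHU (ρAU u ⊗ₜ b) with
    | zero => simp
    | add _ _ h₁ h₂ => simp only [add_tmul, map_add, h₁, h₂]
    | tmul a u' => simp

theorem halfBraidedAction_natural {X₁ X₂ K₁ K₂ : Type u} [AddCommGroup X₁] [Module k X₁]
    [AddCommGroup X₂] [Module k X₂] [AddCommGroup K₁] [Module k K₁] [AddCommGroup K₂] [Module k K₂]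
    {g : X₁ →ₗ[k] X₂} {f : K₁ →ₗ[k] K₂} {ρ₁ : X₁ →ₗ[k] H ⊗[k] X₁} {ρ₂ : X₂ →ₗ[k] H ⊗[k] X₂}
    {σ₁ : X₁ ⊗[k] K₁ →ₗ[k] X₁} {σ₂ : X₂ ⊗[k] K₂ →ₗ[k] X₂}
    {comul₁ : K₁ →ₗ[k] A ⊗[k] K₁} {comul₂ : K₂ →ₗ[k] A ⊗[k] K₂}
    (hρ : g.lTensor H ∘ₗ ρ₁ = ρ₂ ∘ₗ g) (hσ : σ₂ ∘ₗ map g f = g ∘ₗ σ₁)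
    (hc : f.lTensor A ∘ₗ comul₁ = comul₂ ∘ₗ f) :
    halfBraidedAction k mulA act ρ₂ σ₂ comul₂ ∘ₗ map (g.lTensor A) f
      = g.lTensor A ∘ₗ halfBraidedAction k mulA act ρ₁ σ₁ comul₁ := by
  refine TensorProduct.ext' fun m c => ?_
  have hc' : comul₂ (f c) = f.lTensor A (comul₁ c) := (LinearMap.congr_fun hc c).symm
  simp only [comp_apply, map_tmul, halfBraidedAction_apply, hc']
  induction comul₁ c with
  | zero => simp
  | add _ _ h₁ h₂ => simp only [tmul_add, map_add, h₁, h₂]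
  | tmul b c₀ =>
    simp only [lTensor_tmul, TensorProduct.assoc_symm_tmul, rTensor_tmul,
      braidedMulRight_natural mulA act hρ]
    induction braidedMulRight mulA act ρ₁ (m ⊗ₜ b) with
    | zero => simp
    | add _ _ h₁ h₂ => simp only [add_tmul, map_add, h₁, h₂]
    | tmul a x =>
      have hx := LinearMap.congr_fun hσ (x ⊗ₜ c₀)
      simp only [comp_apply, map_tmul] at hx
      simp [hx]

end HalfBraided

theorem lTensor_mul_comp_map {k U B₁ B₂ : Type u} [Field k] [AddCommGroup U] [Module k U]
    [AddCommGroup B₁] [Module k B₁] [AddCommGroup B₂] [Module k B₂]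
    {f : B₁ →ₗ[k] B₂} {mul₁ : B₁ ⊗[k] B₁ →ₗ[k] B₁} {mul₂ : B₂ ⊗[k] B₂ →ₗ[k] B₂}
    (hf : f ∘ₗ mul₁ = mul₂ ∘ₗ map f f) :
    (mul₂.lTensor U ∘ₗ (TensorProduct.assoc k U B₂ B₂).toLinearMap) ∘ₗ map (f.lTensor U) f
      = f.lTensor U ∘ₗ mul₁.lTensor U ∘ₗ (TensorProduct.assoc k U B₁ B₁).toLinearMap := by
  apply TensorProduct.ext_threefold
  intro u b b'
  have hb := LinearMap.congr_fun hf (b ⊗ₜ b')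
  simp only [comp_apply, map_tmul] at hb
  simp [hb]

theorem halfBraidedCoact_comp_mul {k H A U : Type u} [Field k] [Ring H] [HopfAlgebra k H]
    [AddCommGroup A] [Module k A] [AddCommGroup U] [Module k U] (S : BHA k H A)
    (ρAU : U →ₗ[k] A ⊗[k] U) {ρHU : U →ₗ[k] H ⊗[k] U}
    (hρHU : (Coalgebra.comul (R := k) (A := H)).rTensor U ∘ₗ ρHU
      = (TensorProduct.assoc k H H U).symm.toLinearMap ∘ₗ ρHU.lTensor H ∘ₗ ρHU) :
    halfBraidedCoact k S.mul S.act ρAU ρHU S.comul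
        ∘ₗ (S.mul.lTensor U ∘ₗ (TensorProduct.assoc k U A A).toLinearMap)
      = halfBraidedAction k S.mul S.act (diagCoact k ρHU S.coact)
          (S.mul.lTensor U ∘ₗ (TensorProduct.assoc k U A A).toLinearMap) S.comul
        ∘ₗ (halfBraidedCoact k S.mul S.act ρAU ρHU S.comul).rTensor A := by
  apply TensorProduct.ext_threefold
  intro u x y
  simp only [comp_apply, LinearEquiv.coe_coe, TensorProduct.assoc_tmul, lTensor_tmul,
    rTensor_tmul, halfBraidedCoact_apply, halfBraidedAction_apply, S.comul_mul_apply]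
  generalize ρAU u = m
  induction S.comul x with
  | zero => simp
  | add _ _ h₁ h₂ => simp only [tmul_add, add_tmul, map_add, h₁, h₂]
  | tmul x₁ x₂ =>
    induction S.comul y with
    | zero => simp
    | add _ _ h₁ h₂ => simp only [tmul_add, map_add, h₁, h₂]
    | tmul y₁ y₂ =>
      simp only [TensorProduct.assoc_symm_tmul, rTensor_tmul, braidedMulRight_tmul,
        braidedMulRight_diagCoact]
      induction S.coact x₂ with
      | zero => simp
      | add _ _ h₁ h₂ => simp only [tmul_add, add_tmul, map_add, h₁, h₂]
      | tmul h z =>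
        simp only [rTensor_tmul, comp_apply, mk_apply, flip_apply, lTensor_tmul,
          TensorProduct.assoc_tmul, TensorProduct.assoc_symm_tmul, braidedMulRight_mul S hρHU]
        induction braidedMulRight S.mul S.act ρHU (m ⊗ₜ S.mul (x₁ ⊗ₜ S.act (h ⊗ₜ y₁))) with
        | zero => simp
        | add _ _ h₁ h₂ => simp only [add_tmul, map_add, h₁, h₂]
        | tmul a w => simp

theorem tensor_with_coideal_isHopfModule_general
    {k H A : Type u} [Field k] [Ring H] [HopfAlgebra k H]
    [AddCommGroup A] [Module k A] (S : BHA k H A)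
    (K : Submodule k A)
    (comulK : ↥K →ₗ[k] A ⊗[k] ↥K) (hcomulK : S.RestrictsComul K comulK)
    (coactK : ↥K →ₗ[k] H ⊗[k] ↥K) (hcoactK : S.RestrictsCoact K coactK)
    (mulK : ↥K ⊗[k] ↥K →ₗ[k] ↥K) (hmulK : S.RestrictsMul K mulK)
    {U : Type u} [AddCommGroup U] [Module k U]
    (ρHU : U →ₗ[k] H ⊗[k] U) (ρAU : U →ₗ[k] A ⊗[k] U)
    (hρHU : IsComod k ρHU (Coalgebra.comul (R := k) (A := H)) (Coalgebra.counit (R := k) (A := H))) :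
    halfBraidedCoact k S.mul S.act ρAU ρHU comulK
        ∘ₗ (mulK.lTensor U ∘ₗ (TensorProduct.assoc k U ↥K ↥K).toLinearMap)
      = halfBraidedAction k S.mul S.act (diagCoact k ρHU coactK)
          (mulK.lTensor U ∘ₗ (TensorProduct.assoc k U ↥K ↥K).toLinearMap) comulK
        ∘ₗ (halfBraidedCoact k S.mul S.act ρAU ρHU comulK).rTensor ↥K := by
  set j : U ⊗[k] ↥K →ₗ[k] U ⊗[k] A := K.subtype.lTensor U
  set δK := halfBraidedCoact k S.mul S.act ρAU ρHU comulK
  set δA := halfBraidedCoact k S.mul S.act ρAU ρHU S.comul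
  set μA := S.mul.lTensor U ∘ₗ (TensorProduct.assoc k U A A).toLinearMap
  set βA := halfBraidedAction k S.mul S.act (diagCoact k ρHU S.coact) μA S.comul
  have hδ : j.lTensor A ∘ₗ δK = δA ∘ₗ j := halfBraidedCoact_natural S.mul S.act ρAU ρHU hcomulK
  have hσ := lTensor_mul_comp_map (U := U) hmulK
  have hj : Function.Injective (j.lTensor A) :=
    Module.Flat.lTensor_preserves_injective_linearMap j
      (Module.Flat.lTensor_preserves_injective_linearMap _ K.injective_subtype)
  refine (LinearMap.cancel_left hj).mp ?_
  calc j.lTensor A ∘ₗ δK ∘ₗ mulK.lTensor U ∘ₗ (TensorProduct.assoc k U K K).toLinearMap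
      = δA ∘ₗ μA ∘ₗ map j K.subtype := by
        rw [hσ, ← comp_assoc, hδ, comp_assoc]
    _ = βA ∘ₗ δA.rTensor A ∘ₗ map j K.subtype := by
        rw [← comp_assoc, halfBraidedCoact_comp_mul S ρAU hρHU.coassoc, comp_assoc]
    _ = βA ∘ₗ map (j.lTensor A) K.subtype ∘ₗ δK.rTensor K := by
        rw [rTensor_comp_map, map_comp_rTensor, hδ]
    _ = j.lTensor A ∘ₗ halfBraidedAction k S.mul S.act (diagCoact k ρHU coactK)
          (mulK.lTensor U ∘ₗ (TensorProduct.assoc k U K K).toLinearMap) comulK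
          ∘ₗ δK.rTensor K := by
        rw [← comp_assoc, halfBraidedAction_natural S.mul S.act (diagCoact_comp_lTensor ρHU hcoactK)
          hσ hcomulK, comp_assoc]

/-- For a left `A`-comodule `U` in left `H`-comodules and a left coideal
subalgebra `K` of `A` in `H`-comodules, the tensor product `U ⊗ K` — with diagonal
`H`-coaction, half-braided diagonal `A`-coaction and right `K`-action by multiplication on
the second factor — is a Hopf module: the `A`-coaction on `U ⊗ K` is right `K`-linear for
the half-braided diagonal `K`-action on `A ⊗ (U ⊗ K)`. -/
theorem tensor_with_coideal_isHopfModule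
    {k H A : Type u} [Field k] [Ring H] [HopfAlgebra k H]
    [AddCommGroup A] [Module k A] (S : BHA k H A)
    (K : Submodule k A) (hK : S.IsLeftCoidealSubalgebra K)
    (comulK : ↥K →ₗ[k] A ⊗[k] ↥K) (hcomulK : S.RestrictsComul K comulK)
    (coactK : ↥K →ₗ[k] H ⊗[k] ↥K) (hcoactK : S.RestrictsCoact K coactK)
    (mulK : ↥K ⊗[k] ↥K →ₗ[k] ↥K) (hmulK : S.RestrictsMul K mulK)
    {U : Type u} [AddCommGroup U] [Module k U]
    (ρHU : U →ₗ[k] H ⊗[k] U) (ρAU : U →ₗ[k] A ⊗[k] U)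
    (hρHU : IsComod k ρHU (Coalgebra.comul (R := k) (A := H)) (Coalgebra.counit (R := k) (A := H)))
    (hρAU : IsComod k ρAU S.comul S.counit)
    (hcolin : diagCoact k S.coact ρHU ∘ₗ ρAU = ρAU.lTensor H ∘ₗ ρHU) :
    halfBraidedCoact k S.mul S.act ρAU ρHU comulK
        ∘ₗ (mulK.lTensor U ∘ₗ (TensorProduct.assoc k U ↥K ↥K).toLinearMap)
      = halfBraidedAction k S.mul S.act (diagCoact k ρHU coactK)
          (mulK.lTensor U ∘ₗ (TensorProduct.assoc k U ↥K ↥K).toLinearMap) comulK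
        ∘ₗ (halfBraidedCoact k S.mul S.act ρAU ρHU comulK).rTensor ↥K :=
  tensor_with_coideal_isHopfModule_general S K comulK hcomulK coactK hcoactK mulK hmulK ρHU ρAU hρHU
end

section
/- Let D be a cosemisimple bialgebra and C a coalgebra in left D-comodules. Then for any left D-comodule X, the object X ⊗ C with right C-coaction id_X ⊗ Δ and diagonal left D-coaction is an injective object in the category of right C-comodules in left D-comodules. -/
open TensorProduct LinearMap

universe u
set_option maxHeartbeats 1000000

section ComodComod

variable (k : Type u) [Field k] {D C : Type u} [Ring D] [Bialgebra k D]
  [AddCommGroup C] [Module k C]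

/-- `C` (with comultiplication `ΔC`, counit `εC` and `D`-coaction `ρC`) is a coalgebra in
the monoidal category of left `D`-comodules. -/
structure IsCoalgInComod (ρC : C →ₗ[k] D ⊗[k] C) (ΔC : C →ₗ[k] C ⊗[k] C)
    (εC : C →ₗ[k] k) : Prop where
  coalg : IsComod k ΔC ΔC εC
  counit_right : (TensorProduct.rid k C).toLinearMap ∘ₗ εC.lTensor C ∘ₗ ΔC = LinearMap.id
  comod : IsComod k ρC (Coalgebra.comul (R := k) (A := D)) (Coalgebra.counit (R := k) (A := D))
  comul_colinear : diagCoact k ρC ρC ∘ₗ ΔC = ΔC.lTensor D ∘ₗ ρC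
  counit_colinear : ∀ c : C, εC.lTensor D (ρC c) = εC c • ((1 : D) ⊗ₜ (1 : k))

/-- An object of the category of right `C`-comodules in left `D`-comodules. -/
def IsComodComodObj (ρC : C →ₗ[k] D ⊗[k] C) (ΔC : C →ₗ[k] C ⊗[k] C) (εC : C →ₗ[k] k)
    {V : Type u} [AddCommGroup V] [Module k V]
    (ρV : V →ₗ[k] D ⊗[k] V) (δV : V →ₗ[k] V ⊗[k] C) : Prop :=
  IsComod k ρV (Coalgebra.comul (R := k) (A := D)) (Coalgebra.counit (R := k) (A := D)) ∧
  IsRightComod k δV ΔC εC ∧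
  diagCoact k ρV ρC ∘ₗ δV = δV.lTensor D ∘ₗ ρV

/-- A morphism in the category of right `C`-comodules in left `D`-comodules. -/
def IsComodComodHom {V W : Type u} [AddCommGroup V] [Module k V] [AddCommGroup W] [Module k W]
    (ρV : V →ₗ[k] D ⊗[k] V) (δV : V →ₗ[k] V ⊗[k] C)
    (ρW : W →ₗ[k] D ⊗[k] W) (δW : W →ₗ[k] W ⊗[k] C) (f : V →ₗ[k] W) : Prop :=
  ρW ∘ₗ f = f.lTensor D ∘ₗ ρV ∧ δW ∘ₗ f = f.rTensor C ∘ₗ δV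

/-- `V` is an injective object in the category of right `C`-comodules in left
`D`-comodules. -/
def IsInjObj (ρC : C →ₗ[k] D ⊗[k] C) (ΔC : C →ₗ[k] C ⊗[k] C) (εC : C →ₗ[k] k)
    {V : Type u} [AddCommGroup V] [Module k V]
    (ρV : V →ₗ[k] D ⊗[k] V) (δV : V →ₗ[k] V ⊗[k] C) : Prop :=
  ∀ (U : Type u) [AddCommGroup U] [Module k U]
    (W : Type u) [AddCommGroup W] [Module k W]
    (ρU : U →ₗ[k] D ⊗[k] U) (δU : U →ₗ[k] U ⊗[k] C)
    (ρW : W →ₗ[k] D ⊗[k] W) (δW : W →ₗ[k] W ⊗[k] C),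
    IsComodComodObj k ρC ΔC εC ρU δU → IsComodComodObj k ρC ΔC εC ρW δW →
    ∀ i : U →ₗ[k] W, IsComodComodHom k ρU δU ρW δW i → Function.Injective i →
    ∀ f : U →ₗ[k] V, IsComodComodHom k ρU δU ρV δV f →
    ∃ g : W →ₗ[k] V, IsComodComodHom k ρW δW ρV δV g ∧ g ∘ₗ i = f

/-- The diagonal `D`-coaction on `X ⊗ C` for a `D`-comodule `X`. -/
noncomputable def cofreeDCoact {X : Type u} [AddCommGroup X] [Module k X]
    (ρX : X →ₗ[k] D ⊗[k] X) (ρC : C →ₗ[k] D ⊗[k] C) :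
    X ⊗[k] C →ₗ[k] D ⊗[k] (X ⊗[k] C) :=
  diagCoact k ρX ρC

/-- The right `C`-coaction `id_X ⊗ Δ` on `X ⊗ C`. -/
noncomputable def cofreeCCoact {X : Type u} [AddCommGroup X] [Module k X]
    (ΔC : C →ₗ[k] C ⊗[k] C) :
    X ⊗[k] C →ₗ[k] (X ⊗[k] C) ⊗[k] C :=
  (TensorProduct.assoc k X C C).symm.toLinearMap ∘ₗ ΔC.lTensor X

end ComodComod

/-!
Composing with `id ⊗ ε : X ⊗ C → X` identifies maps into `X ⊗ C` that are colinear for both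
coactions with `D`-colinear maps into `X`; the inverse sends `g` to `(g ⊗ id) ∘ δ`. Extending a
bi-colinear `f : U → X ⊗ C` along a monomorphism `i : U → W` therefore reduces to extending the
`D`-colinear map `(id ⊗ ε) ∘ f` along `i`. Since `D` is cosemisimple, the image of `i` has a
complementary subcomodule, and the projection along it is a colinear retraction of `i`.
-/

section Colinear

variable {k : Type u} [Field k] {H : Type u} [AddCommGroup H] [Module k H]
  {U V W : Type u} [AddCommGroup U] [Module k U] [AddCommGroup V] [Module k V]
  [AddCommGroup W] [Module k W]

def IsColinear (ρV : V →ₗ[k] H ⊗[k] V) (ρW : W →ₗ[k] H ⊗[k] W) (f : V →ₗ[k] W) : Prop :=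
  ρW ∘ₗ f = f.lTensor H ∘ₗ ρV

theorem IsColinear.id (ρV : V →ₗ[k] H ⊗[k] V) : IsColinear ρV ρV LinearMap.id := by
  simp [IsColinear]

theorem IsColinear.comp {ρU : U →ₗ[k] H ⊗[k] U} {ρV : V →ₗ[k] H ⊗[k] V}
    {ρW : W →ₗ[k] H ⊗[k] W} {g : V →ₗ[k] W} {f : U →ₗ[k] V}
    (hg : IsColinear ρV ρW g) (hf : IsColinear ρU ρV f) : IsColinear ρU ρW (g ∘ₗ f) := by
  unfold IsColinear at *
  rw [← comp_assoc, hg, comp_assoc, hf, ← comp_assoc, lTensor_comp]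

theorem IsColinear.isSubcomod_range {ρU : U →ₗ[k] H ⊗[k] U} {ρW : W →ₗ[k] H ⊗[k] W}
    {i : U →ₗ[k] W} (hi : IsColinear ρU ρW i) : IsSubcomod k ρW (range i) := by
  rintro _ ⟨u, rfl⟩
  refine ⟨(i.rangeRestrict.lTensor H) (ρU u), ?_⟩
  rw [← lTensor_comp_apply]
  exact (congr($hi u)).symm

theorem isColinear_linearProjOfIsCompl {ρU : U →ₗ[k] H ⊗[k] U} {ρW : W →ₗ[k] H ⊗[k] W}
    {i : U →ₗ[k] W} (hi : IsColinear ρU ρW i) (hinj : Function.Injective i)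
    {W' : Submodule k W} (hcompl : IsCompl (range i) W') (hW' : IsSubcomod k ρW W') :
    IsColinear ρW ρU (linearProjOfIsCompl W' i hinj hcompl) := by
  set π := linearProjOfIsCompl W' i hinj hcompl
  have hπi : π ∘ₗ i = LinearMap.id :=
    LinearMap.ext (linearProjOfIsCompl_apply_left W' i hinj hcompl)
  have hπW' : π ∘ₗ W'.subtype = 0 :=
    LinearMap.ext fun w ↦ linearProjOfIsCompl_apply_right W' i hinj hcompl w
  ext w
  obtain ⟨⟨_, u, rfl⟩, ⟨w', hw'⟩, rfl, -⟩ := Submodule.existsUnique_add_of_isCompl hcompl w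
  obtain ⟨t, ht⟩ := hW' w' hw'
  have on_range : ρU (π (i u)) = π.lTensor H (ρW (i u)) := by
    rw [← comp_apply ρW, hi, comp_apply, ← lTensor_comp_apply, hπi, lTensor_id_apply,
      linearProjOfIsCompl_apply_left]
  have on_compl : ρU (π w') = π.lTensor H (ρW w') := by
    have hπw' : π w' = 0 := linearProjOfIsCompl_apply_right' W' i hinj hcompl w' hw'
    rw [hπw', map_zero, ← ht, ← lTensor_comp_apply, hπW', lTensor_zero, LinearMap.zero_apply]
  simp [on_range, on_compl]

theorem CosemisimpleCoalg.exists_isColinear_extension {Δ : H →ₗ[k] H ⊗[k] H} {ε : H →ₗ[k] k}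
    (hcss : CosemisimpleCoalg k Δ ε) {ρU : U →ₗ[k] H ⊗[k] U} {ρV : V →ₗ[k] H ⊗[k] V}
    {ρW : W →ₗ[k] H ⊗[k] W} (hW : IsComod k ρW Δ ε) {i : U →ₗ[k] W}
    (hi : IsColinear ρU ρW i) (hinj : Function.Injective i) {f : U →ₗ[k] V}
    (hf : IsColinear ρU ρV f) :
    ∃ g : W →ₗ[k] V, IsColinear ρW ρV g ∧ g ∘ₗ i = f := by
  obtain ⟨W', hcompl, hW'⟩ := hcss W ρW hW (range i) hi.isSubcomod_range
  refine ⟨f ∘ₗ linearProjOfIsCompl W' i hinj hcompl,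
    hf.comp (isColinear_linearProjOfIsCompl hi hinj hcompl hW'), ?_⟩
  ext u
  simp

end Colinear

section Cofree

variable {k : Type u} [Field k] {D C : Type u} [Ring D] [Algebra k D]
  [AddCommGroup C] [Module k C]
  {V V' W W' : Type u} [AddCommGroup V] [Module k V] [AddCommGroup V'] [Module k V']
  [AddCommGroup W] [Module k W] [AddCommGroup W'] [Module k W']

theorem IsColinear.map_diagCoact {ρV : V →ₗ[k] D ⊗[k] V} {ρV' : V' →ₗ[k] D ⊗[k] V'}
    {ρW : W →ₗ[k] D ⊗[k] W} {ρW' : W' →ₗ[k] D ⊗[k] W'} {f : V →ₗ[k] V'} {g : W →ₗ[k] W'}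
    (hf : IsColinear ρV ρV' f) (hg : IsColinear ρW ρW' g) :
    IsColinear (diagCoact k ρV ρW) (diagCoact k ρV' ρW') (map f g) := by
  unfold IsColinear diagCoact at *
  calc _ = (mul' k D).rTensor (V' ⊗[k] W') ∘ₗ (tensorTensorTensorComm k D V' D W').toLinearMap
        ∘ₗ map (f.lTensor D) (g.lTensor D) ∘ₗ map ρV ρW := by
        rw [comp_assoc, comp_assoc, ← map_comp, hf, hg, map_comp]
    _ = _ := by
        simp only [lTensor, ← comp_assoc]
        congr 1
        rw [comp_assoc, tensorTensorTensorComm_comp_map, ← comp_assoc]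
        congr 1
        ext
        simp

theorem isColinear_rid {ρV : V →ₗ[k] D ⊗[k] V} :
    IsColinear (diagCoact k ρV (TensorProduct.mk k D k 1)) ρV
      (TensorProduct.rid k V).toLinearMap := by
  apply TensorProduct.ext'
  intro v t
  simp only [diagCoact, coe_comp, Function.comp_apply, LinearEquiv.coe_coe, map_tmul,
    mk_apply, rid_tmul, map_smul]
  induction ρV v using TensorProduct.induction_on with
  | zero => simp
  | tmul d x => simp [smul_tmul']
  | add p q hp hq => simp only [add_tmul, map_add, hp, hq, smul_add]

def cofreeCounit (X : Type u) [AddCommGroup X] [Module k X] (εC : C →ₗ[k] k) :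
    X ⊗[k] C →ₗ[k] X :=
  (TensorProduct.rid k X).toLinearMap ∘ₗ εC.lTensor X

theorem isColinear_cofreeCounit {ρV : V →ₗ[k] D ⊗[k] V} {ρC : C →ₗ[k] D ⊗[k] C}
    {εC : C →ₗ[k] k} (hε : ∀ c : C, εC.lTensor D (ρC c) = εC c • ((1 : D) ⊗ₜ (1 : k))) :
    IsColinear (diagCoact k ρV ρC) ρV (cofreeCounit V εC) := by
  have hε' : IsColinear ρC (TensorProduct.mk k D k 1) εC := by
    ext c
    rw [comp_apply, comp_apply, hε, mk_apply, ← tmul_smul, smul_eq_mul, mul_one]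
  exact isColinear_rid.comp ((IsColinear.id ρV).map_diagCoact hε')

theorem rTensor_cofreeCounit_comp_cofreeCCoact {ΔC : C →ₗ[k] C ⊗[k] C} {εC : C →ₗ[k] k}
    (hΔ : IsComod k ΔC ΔC εC) :
    (cofreeCounit V εC).rTensor C ∘ₗ cofreeCCoact k ΔC = LinearMap.id := by
  apply TensorProduct.ext'
  intro v c
  -- write `c` as `(ε ⊗ id) (Δ c)`, so that `Δ c` can be split into pure tensors
  conv_rhs => rw [LinearMap.id_apply, ← LinearMap.id_apply (R := k) c, ← hΔ.counit]
  simp only [cofreeCCoact, cofreeCounit, coe_comp, Function.comp_apply, LinearEquiv.coe_coe,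
    lTensor_tmul]
  induction ΔC c using TensorProduct.induction_on with
  | zero => simp
  | tmul c₁ c₂ => simp [smul_tmul]
  | add p q hp hq => simp only [tmul_add, map_add, hp, hq]

theorem cofreeCCoact_comp_rTensor (ΔC : C →ₗ[k] C ⊗[k] C) (g : W →ₗ[k] V) :
    cofreeCCoact k ΔC ∘ₗ g.rTensor C = (g.rTensor C).rTensor C ∘ₗ cofreeCCoact k ΔC := by
  apply TensorProduct.ext'
  intro w c
  simp only [cofreeCCoact, coe_comp, Function.comp_apply, LinearEquiv.coe_coe,
    rTensor_tmul, lTensor_tmul]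
  induction ΔC c using TensorProduct.induction_on with
  | zero => simp
  | tmul c₁ c₂ => simp
  | add p q hp hq => simp only [tmul_add, map_add, hp, hq]

theorem cofreeCCoact_comp_rTensor_comp {ΔC : C →ₗ[k] C ⊗[k] C} {εC : C →ₗ[k] k}
    {δW : W →ₗ[k] W ⊗[k] C} (hδ : IsRightComod k δW ΔC εC) (g : W →ₗ[k] V) :
    cofreeCCoact k ΔC ∘ₗ g.rTensor C ∘ₗ δW = (g.rTensor C ∘ₗ δW).rTensor C ∘ₗ δW := by
  have hcoassoc : cofreeCCoact k ΔC ∘ₗ δW = δW.rTensor C ∘ₗ δW := by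
    rw [cofreeCCoact, comp_assoc, hδ.coassoc, ← comp_assoc, LinearEquiv.symm_comp, id_comp]
  rw [← comp_assoc, cofreeCCoact_comp_rTensor, comp_assoc, hcoassoc, rTensor_comp, comp_assoc]

theorem rTensor_cofreeCounit_comp_coact {ΔC : C →ₗ[k] C ⊗[k] C} {εC : C →ₗ[k] k}
    (hΔ : IsComod k ΔC ΔC εC) {δV : V →ₗ[k] V ⊗[k] C} {h : V →ₗ[k] W ⊗[k] C}
    (hh : cofreeCCoact k ΔC ∘ₗ h = h.rTensor C ∘ₗ δV) :
    (cofreeCounit W εC ∘ₗ h).rTensor C ∘ₗ δV = h := by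
  rw [rTensor_comp, comp_assoc, ← hh, ← comp_assoc, rTensor_cofreeCounit_comp_cofreeCCoact hΔ,
    id_comp]

end Cofree

theorem cofree_isInjObj_general
    {k D C : Type u} [Field k] [Ring D] [Bialgebra k D]
    [AddCommGroup C] [Module k C]
    (hcss : CosemisimpleCoalg k (Coalgebra.comul (R := k) (A := D))
      (Coalgebra.counit (R := k) (A := D)))
    (ρC : C →ₗ[k] D ⊗[k] C) (ΔC : C →ₗ[k] C ⊗[k] C) (εC : C →ₗ[k] k)
    (hC : IsCoalgInComod k ρC ΔC εC)
    {X : Type u} [AddCommGroup X] [Module k X]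
    (ρX : X →ₗ[k] D ⊗[k] X) :
    IsInjObj k ρC ΔC εC (cofreeDCoact k ρX ρC) (cofreeCCoact k ΔC) := by
  intro U _ _ W _ _ ρU δU ρW δW _ hW i hi hinj f hf
  obtain ⟨g, hg, hgi⟩ := hcss.exists_isColinear_extension hW.1 hi.1 hinj
    ((isColinear_cofreeCounit hC.counit_colinear).comp hf.1)
  refine ⟨g.rTensor C ∘ₗ δW,
    ⟨(hg.map_diagCoact (IsColinear.id ρC)).comp hW.2.2, cofreeCCoact_comp_rTensor_comp hW.2.1 g⟩,
    ?_⟩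
  calc (g.rTensor C ∘ₗ δW) ∘ₗ i = (g ∘ₗ i).rTensor C ∘ₗ δU := by
        rw [comp_assoc, hi.2, rTensor_comp, comp_assoc]
    _ = f := by rw [hgi]; exact rTensor_cofreeCounit_comp_coact hC.coalg hf.2

/-- Over a cosemisimple bialgebra `D`, for any left `D`-comodule `X`,
the object `X ⊗ C` with right `C`-coaction `id ⊗ Δ` and diagonal `D`-coaction is an
injective object in the category of right `C`-comodules in left `D`-comodules. -/
theorem cofree_isInjObj
    {k D C : Type u} [Field k] [Ring D] [Bialgebra k D]
    [AddCommGroup C] [Module k C]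
    (hcss : CosemisimpleCoalg k (Coalgebra.comul (R := k) (A := D))
      (Coalgebra.counit (R := k) (A := D)))
    (ρC : C →ₗ[k] D ⊗[k] C) (ΔC : C →ₗ[k] C ⊗[k] C) (εC : C →ₗ[k] k)
    (hC : IsCoalgInComod k ρC ΔC εC)
    {X : Type u} [AddCommGroup X] [Module k X]
    (ρX : X →ₗ[k] D ⊗[k] X)
    (hX : IsComod k ρX (Coalgebra.comul (R := k) (A := D)) (Coalgebra.counit (R := k) (A := D))) :
    IsInjObj k ρC ΔC εC (cofreeDCoact k ρX ρC) (cofreeCCoact k ΔC) :=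
  cofree_isInjObj_general hcss ρC ΔC εC hC ρX
end

section
/- Let H be a cosemisimple Hopf algebra, A a braided Hopf algebra in Yetter–Drinfeld modules over H, and K a left coideal subalgebra of A in left H-comodules. Suppose every non-zero Hopf module in the category of left A-comodules, left H-comodules, right K-modules contains a non-zero Hopf submodule that is K-free in left H-comodules. Then every Hopf module in this category is K-free in left H-comodules, i.e. of the form X ⊗ K for some H-subcomodule X via the K-action. -/
open TensorProduct LinearMap

universe u
set_option maxHeartbeats 1000000

/-!
Zorn's lemma gives an `H`-subcomodule `X ⊆ V` maximal among those for which the action map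
`X ⊗ K → V` is injective with image a Hopf submodule `W`; chains are handled by their unions,
since tensor products commute with directed unions. If `W ≠ V`, the hypothesis applied to the
Hopf module `V ⧸ W` yields a non-zero `K`-free Hopf submodule `X₁ ⊗ K`. Cosemisimplicity of `H`
splits `V = W ⊕ W'` as comodules, so `X₁` lifts to an `H`-subcomodule `Y ⊆ W'`; then `X ⊕ Y`
freely generates the preimage of `X₁ ⊗ K`, contradicting maximality.
-/

section Subcomodule

variable {k C V Q : Type u} [Field k] [AddCommGroup C] [Module k C]
  [AddCommGroup V] [Module k V] [AddCommGroup Q] [Module k Q]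

theorem isSubcomod_iff_mkQ {ρ : V →ₗ[k] C ⊗[k] V} {W : Submodule k V} :
    IsSubcomod k ρ W ↔ ∀ w ∈ W, W.mkQ.lTensor C (ρ w) = 0 := by
  simp only [IsSubcomod, ← lTensor_mkQ, mem_ker]

theorem range_lTensor_subtype_mono {W W' : Submodule k V} (h : W ≤ W') :
    range (W.subtype.lTensor C) ≤ range (W'.subtype.lTensor C) := by
  rw [← Submodule.subtype_comp_inclusion W W' h, lTensor_comp]
  exact range_comp_le_range _ _

theorem isSubcomod_sSup {ρ : V →ₗ[k] C ⊗[k] V} {s : Set (Submodule k V)}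
    (h : ∀ W ∈ s, IsSubcomod k ρ W) : IsSubcomod k ρ (sSup s) := fun _ hw =>
  (sSup_le fun W hW w hw => range_lTensor_subtype_mono (le_sSup hW) (h W hW w hw) :
    sSup s ≤ (range ((sSup s).subtype.lTensor C)).comap ρ) hw

theorem isSubcomod_bot (ρ : V →ₗ[k] C ⊗[k] V) : IsSubcomod k ρ ⊥ := by
  simpa using isSubcomod_sSup (ρ := ρ) (s := ∅) (by simp)

theorem IsSubcomod.sup {ρ : V →ₗ[k] C ⊗[k] V} {W W' : Submodule k V} (h : IsSubcomod k ρ W)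
    (h' : IsSubcomod k ρ W') : IsSubcomod k ρ (W ⊔ W') :=
  sSup_pair (a := W) ▸ isSubcomod_sSup (by rintro _ (rfl | rfl) <;> assumption)

theorem IsSubcomod.map {ρ : V →ₗ[k] C ⊗[k] V} {ρ' : Q →ₗ[k] C ⊗[k] Q} {f : V →ₗ[k] Q}
    (hf : ρ' ∘ₗ f = f.lTensor C ∘ₗ ρ) {W : Submodule k V} (hW : IsSubcomod k ρ W) :
    IsSubcomod k ρ' (W.map f) := by
  rintro _ ⟨w, hw, rfl⟩
  obtain ⟨t, ht⟩ := hW w hw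
  refine ⟨(f.submoduleMap W).lTensor C t, ?_⟩
  have hsub : (W.map f).subtype ∘ₗ f.submoduleMap W = f ∘ₗ W.subtype := rfl
  rw [← comp_apply, ← lTensor_comp, hsub, lTensor_comp, comp_apply, ht, ← comp_apply, ← hf,
    comp_apply]

theorem IsSubcomod.comap {ρ : V →ₗ[k] C ⊗[k] V} {ρ' : Q →ₗ[k] C ⊗[k] Q} {f : V →ₗ[k] Q}
    (hf : ρ' ∘ₗ f = f.lTensor C ∘ₗ ρ) {W : Submodule k Q} (hW : IsSubcomod k ρ' W) :
    IsSubcomod k ρ (W.comap f) := by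
  rw [isSubcomod_iff_mkQ] at hW ⊢
  intro v hv
  -- `V ⧸ f⁻¹ W → Q ⧸ W` is injective, and stays so after tensoring with `C`
  have hinj : Function.Injective (((W.comap f).mapQ W f le_rfl).lTensor C) :=
    Module.Flat.lTensor_preserves_injective_linearMap _ <| by
      rw [← ker_eq_bot, Submodule.ker_mapQ, Submodule.mkQ_map_self]
  apply hinj
  rw [map_zero, ← comp_apply, ← lTensor_comp, Submodule.mapQ_mkQ, lTensor_comp, comp_apply,
    ← comp_apply (f.lTensor C), ← hf, comp_apply]
  exact hW _ hv

theorem IsSubcomod.exists_restrict {ρ : V →ₗ[k] C ⊗[k] V} {W : Submodule k V}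
    (h : IsSubcomod k ρ W) :
    ∃ ρW : W →ₗ[k] C ⊗[k] W, W.subtype.lTensor C ∘ₗ ρW = ρ ∘ₗ W.subtype :=
  ⟨(LinearEquiv.ofInjective _ (Module.Flat.lTensor_preserves_injective_linearMap _
      W.injective_subtype)).symm.toLinearMap ∘ₗ (ρ ∘ₗ W.subtype).codRestrict _ fun w => h w w.2,
    by ext; simp; rfl⟩

theorem CosemisimpleCoalg.exists_isSubcomod_disjoint_ker_map_eq {Δ : C →ₗ[k] C ⊗[k] C}
    {ε : C →ₗ[k] k} (hcss : CosemisimpleCoalg k Δ ε) {ρ : V →ₗ[k] C ⊗[k] V}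
    (hρ : IsComod k ρ Δ ε) {ρ' : Q →ₗ[k] C ⊗[k] Q} {π : V →ₗ[k] Q}
    (hπ : Function.Surjective π) (hπρ : ρ' ∘ₗ π = π.lTensor C ∘ₗ ρ)
    (hker : IsSubcomod k ρ (ker π)) {X : Submodule k Q} (hX : IsSubcomod k ρ' X) :
    ∃ Y : Submodule k V, IsSubcomod k ρ Y ∧ Disjoint Y (ker π) ∧ Y.map π = X := by
  obtain ⟨W, hcompl, hW⟩ := hcss V ρ hρ _ hker
  obtain ⟨ρW, hρW⟩ := hW.exists_restrict
  have hcolin : ρ' ∘ₗ (π ∘ₗ W.subtype) = (π ∘ₗ W.subtype).lTensor C ∘ₗ ρW := by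
    rw [lTensor_comp, comp_assoc, hρW, ← comp_assoc, hπρ, comp_assoc]
  have hrange : range (π ∘ₗ W.subtype) = ⊤ := by
    rw [range_comp, Submodule.range_subtype, ← range_eq_top.2 hπ, range_eq_map,
      ← hcompl.sup_eq_top, Submodule.map_sup, show (ker π).map π = ⊥ from
        le_bot_iff.1 (Submodule.map_le_iff_le_comap.2 le_rfl), bot_sup_eq]
  refine ⟨(X.comap (π ∘ₗ W.subtype)).map W.subtype, (hX.comap hcolin).map hρW.symm,
    hcompl.disjoint.symm.mono_left (Submodule.map_subtype_le _ _), ?_⟩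
  rw [← Submodule.map_comp, Submodule.map_comap_eq, hrange, top_inf_eq]

end Subcomodule

section Naturality

variable {k : Type u} [Field k]

theorem diagCoact_comp_map {H V W V' W' : Type u} [Ring H] [Algebra k H]
    [AddCommGroup V] [Module k V] [AddCommGroup W] [Module k W]
    [AddCommGroup V'] [Module k V'] [AddCommGroup W'] [Module k W']
    {ρV : V →ₗ[k] H ⊗[k] V} {ρW : W →ₗ[k] H ⊗[k] W}
    {ρV' : V' →ₗ[k] H ⊗[k] V'} {ρW' : W' →ₗ[k] H ⊗[k] W'} {f : V →ₗ[k] V'} {g : W →ₗ[k] W'}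
    (hf : ρV' ∘ₗ f = f.lTensor H ∘ₗ ρV) (hg : ρW' ∘ₗ g = g.lTensor H ∘ₗ ρW) :
    diagCoact k ρV' ρW' ∘ₗ map f g = (map f g).lTensor H ∘ₗ diagCoact k ρV ρW := by
  have hmul : (mul' k H).rTensor (V' ⊗[k] W') ∘ₗ (tensorTensorTensorComm k H V' H W').toLinearMap
        ∘ₗ map (f.lTensor H) (g.lTensor H)
      = (map f g).lTensor H ∘ₗ (mul' k H).rTensor (V ⊗[k] W)
        ∘ₗ (tensorTensorTensorComm k H V H W).toLinearMap := by
    ext; simp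
  simp only [diagCoact, comp_assoc, ← map_comp, hf, hg]
  simpa only [map_comp, comp_assoc] using congr($hmul ∘ₗ map ρV ρW)

theorem diagCoact_comp_lTensor_s12 {H V W W' : Type u} [Ring H] [Algebra k H]
    [AddCommGroup V] [Module k V] [AddCommGroup W] [Module k W] [AddCommGroup W'] [Module k W']
    (ρV : V →ₗ[k] H ⊗[k] V) {ρW : W →ₗ[k] H ⊗[k] W} {ρW' : W' →ₗ[k] H ⊗[k] W'}
    {g : W →ₗ[k] W'} (hg : ρW' ∘ₗ g = g.lTensor H ∘ₗ ρW) :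
    diagCoact k ρV ρW' ∘ₗ g.lTensor V = (g.lTensor V).lTensor H ∘ₗ diagCoact k ρV ρW :=
  diagCoact_comp_map (by rw [comp_id, lTensor_id, id_comp]) hg

theorem diagCoact_comp_rTensor {H V V' W : Type u} [Ring H] [Algebra k H]
    [AddCommGroup V] [Module k V] [AddCommGroup V'] [Module k V'] [AddCommGroup W] [Module k W]
    {ρV : V →ₗ[k] H ⊗[k] V} {ρV' : V' →ₗ[k] H ⊗[k] V'} (ρW : W →ₗ[k] H ⊗[k] W)
    {f : V →ₗ[k] V'} (hf : ρV' ∘ₗ f = f.lTensor H ∘ₗ ρV) :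
    diagCoact k ρV' ρW ∘ₗ f.rTensor W = (f.rTensor W).lTensor H ∘ₗ diagCoact k ρV ρW :=
  diagCoact_comp_map hf (by rw [comp_id, lTensor_id, id_comp])

theorem halfBraidedAction_comp_rTensor_lTensor {H A X X' K' : Type u} [Ring H] [Algebra k H]
    [AddCommGroup A] [Module k A] [AddCommGroup X] [Module k X]
    [AddCommGroup X'] [Module k X'] [AddCommGroup K'] [Module k K']
    (mulA : A ⊗[k] A →ₗ[k] A) (act : H ⊗[k] A →ₗ[k] A) (comulK : K' →ₗ[k] A ⊗[k] K')
    {ρ : X →ₗ[k] H ⊗[k] X} {ρ' : X' →ₗ[k] H ⊗[k] X'}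
    {σ : X ⊗[k] K' →ₗ[k] X} {σ' : X' ⊗[k] K' →ₗ[k] X'} {f : X →ₗ[k] X'}
    (hρ : ρ' ∘ₗ f = f.lTensor H ∘ₗ ρ) (hσ : σ' ∘ₗ f.rTensor K' = f ∘ₗ σ) :
    halfBraidedAction k mulA act ρ' σ' comulK ∘ₗ (f.lTensor A).rTensor K'
      = f.lTensor A ∘ₗ halfBraidedAction k mulA act ρ σ comulK := by
  have hσ' (x : X) (c : K') : σ' (f x ⊗ₜ c) = f (σ (x ⊗ₜ c)) := congr($hσ (x ⊗ₜ c))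
  have hρA : ((TensorProduct.assoc k A H X').symm.toLinearMap ∘ₗ ρ'.lTensor A).rTensor (A ⊗[k] K')
        ∘ₗ (f.lTensor A).rTensor (A ⊗[k] K')
      = ((TensorProduct.assoc k A H X').symm.toLinearMap ∘ₗ (f.lTensor H).lTensor A).rTensor
          (A ⊗[k] K') ∘ₗ (ρ.lTensor A).rTensor (A ⊗[k] K') := by
    rw [← rTensor_comp, ← rTensor_comp, comp_assoc, ← lTensor_comp, hρ, lTensor_comp, comp_assoc]
  have hσA (M : (A ⊗[k] H) ⊗[k] A →ₗ[k] A) :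
      map M σ' ∘ₗ (tensorTensorTensorComm k (A ⊗[k] H) X' A K').toLinearMap
        ∘ₗ ((TensorProduct.assoc k A H X').symm.toLinearMap ∘ₗ (f.lTensor H).lTensor A).rTensor
          (A ⊗[k] K')
      = f.lTensor A ∘ₗ map M σ ∘ₗ (tensorTensorTensorComm k (A ⊗[k] H) X A K').toLinearMap
        ∘ₗ (TensorProduct.assoc k A H X).symm.toLinearMap.rTensor (A ⊗[k] K') := by
    ext; simp [hσ']
  set M := mulA ∘ₗ act.lTensor A ∘ₗ (TensorProduct.assoc k A H A).toLinearMap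
  calc (map M σ' ∘ₗ (tensorTensorTensorComm k (A ⊗[k] H) X' A K').toLinearMap
          ∘ₗ ((TensorProduct.assoc k A H X').symm.toLinearMap ∘ₗ ρ'.lTensor A).rTensor (A ⊗[k] K')
          ∘ₗ comulK.lTensor (A ⊗[k] X')) ∘ₗ (f.lTensor A).rTensor K'
      = map M σ' ∘ₗ (tensorTensorTensorComm k (A ⊗[k] H) X' A K').toLinearMap
          ∘ₗ (((TensorProduct.assoc k A H X').symm.toLinearMap ∘ₗ ρ'.lTensor A).rTensor
            (A ⊗[k] K') ∘ₗ (f.lTensor A).rTensor (A ⊗[k] K')) ∘ₗ comulK.lTensor (A ⊗[k] X) := by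
        rw [comp_assoc, comp_assoc, comp_assoc, lTensor_comp_rTensor,
          ← rTensor_comp_lTensor _ (f.lTensor A) comulK]
        rfl
    _ = (map M σ' ∘ₗ (tensorTensorTensorComm k (A ⊗[k] H) X' A K').toLinearMap
          ∘ₗ ((TensorProduct.assoc k A H X').symm.toLinearMap ∘ₗ (f.lTensor H).lTensor A).rTensor
            (A ⊗[k] K')) ∘ₗ (ρ.lTensor A).rTensor (A ⊗[k] K') ∘ₗ comulK.lTensor (A ⊗[k] X) := by
        rw [hρA]; rfl
    _ = f.lTensor A ∘ₗ halfBraidedAction k mulA act ρ σ comulK := by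
        rw [hσA, halfBraidedAction, rTensor_comp]; rfl

end Naturality

section Pushforward

variable {k C V Q : Type u} [Field k] [AddCommGroup C] [Module k C]
  [AddCommGroup V] [Module k V] [AddCommGroup Q] [Module k Q]

theorem IsComod.of_surjective {Δ : C →ₗ[k] C ⊗[k] C} {ε : C →ₗ[k] k} {ρ : V →ₗ[k] C ⊗[k] V}
    (hρ : IsComod k ρ Δ ε) {ρ' : Q →ₗ[k] C ⊗[k] Q} {π : V →ₗ[k] Q}
    (hπ : Function.Surjective π) (hπρ : ρ' ∘ₗ π = π.lTensor C ∘ₗ ρ) : IsComod k ρ' Δ ε where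
  counit := by
    have hlid : (TensorProduct.lid k Q).toLinearMap ∘ₗ ε.rTensor Q ∘ₗ π.lTensor C
        = π ∘ₗ (TensorProduct.lid k V).toLinearMap ∘ₗ ε.rTensor V := by
      ext; simp
    refine (cancel_right hπ).1 ?_
    calc ((TensorProduct.lid k Q).toLinearMap ∘ₗ ε.rTensor Q ∘ₗ ρ') ∘ₗ π
        = ((TensorProduct.lid k Q).toLinearMap ∘ₗ ε.rTensor Q ∘ₗ π.lTensor C) ∘ₗ ρ := by
          rw [comp_assoc, comp_assoc, hπρ]; rfl
      _ = π ∘ₗ (TensorProduct.lid k V).toLinearMap ∘ₗ ε.rTensor V ∘ₗ ρ := by rw [hlid]; rfl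
      _ = LinearMap.id ∘ₗ π := by rw [hρ.counit]; rfl
  coassoc := by
    have hassoc : (TensorProduct.assoc k C C Q).symm.toLinearMap ∘ₗ (π.lTensor C).lTensor C
        = π.lTensor (C ⊗[k] C) ∘ₗ (TensorProduct.assoc k C C V).symm.toLinearMap := by
      ext; simp
    have hlT : ρ'.lTensor C ∘ₗ π.lTensor C = (π.lTensor C).lTensor C ∘ₗ ρ.lTensor C := by
      rw [← lTensor_comp, hπρ, lTensor_comp]
    refine (cancel_right hπ).1 ?_
    calc (Δ.rTensor Q ∘ₗ ρ') ∘ₗ π = (Δ.rTensor Q ∘ₗ π.lTensor C) ∘ₗ ρ := by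
          rw [comp_assoc, hπρ]; rfl
      _ = π.lTensor (C ⊗[k] C) ∘ₗ Δ.rTensor V ∘ₗ ρ := by
          rw [rTensor_comp_lTensor, ← lTensor_comp_rTensor]; rfl
      _ = ((TensorProduct.assoc k C C Q).symm.toLinearMap ∘ₗ (π.lTensor C).lTensor C)
            ∘ₗ ρ.lTensor C ∘ₗ ρ := by rw [hρ.coassoc, hassoc]; rfl
      _ = (TensorProduct.assoc k C C Q).symm.toLinearMap
            ∘ₗ ((π.lTensor C).lTensor C ∘ₗ ρ.lTensor C) ∘ₗ ρ := rfl
      _ = ((TensorProduct.assoc k C C Q).symm.toLinearMap ∘ₗ ρ'.lTensor C) ∘ₗ (ρ' ∘ₗ π) := by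
          rw [← hlT, hπρ]; rfl

theorem IsRightMod.of_surjective {B : Type u} [AddCommGroup B] [Module k B]
    {μ : B ⊗[k] B →ₗ[k] B} {oneB : B} {σ : V ⊗[k] B →ₗ[k] V} (hσ : IsRightMod k σ μ oneB)
    {σ' : Q ⊗[k] B →ₗ[k] Q} {π : V →ₗ[k] Q} (hπ : Function.Surjective π)
    (hπσ : σ' ∘ₗ π.rTensor B = π ∘ₗ σ) : IsRightMod k σ' μ oneB where
  act_one q := by
    obtain ⟨v, rfl⟩ := hπ q
    rw [← rTensor_tmul, ← comp_apply, hπσ, comp_apply, hσ.act_one]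
  act_assoc := by
    have hassoc : (TensorProduct.assoc k Q B B).toLinearMap ∘ₗ (π.rTensor B).rTensor B
        = π.rTensor (B ⊗[k] B) ∘ₗ (TensorProduct.assoc k V B B).toLinearMap := by
      ext; simp
    refine (cancel_right (rTensor_surjective B (rTensor_surjective B hπ))).1 ?_
    calc (σ' ∘ₗ σ'.rTensor B) ∘ₗ (π.rTensor B).rTensor B = σ' ∘ₗ (σ' ∘ₗ π.rTensor B).rTensor B := by
          rw [rTensor_comp]; rfl
      _ = π ∘ₗ σ ∘ₗ σ.rTensor B := by rw [hπσ, rTensor_comp, ← comp_assoc, hπσ]; rfl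
      _ = (π ∘ₗ σ) ∘ₗ μ.lTensor V ∘ₗ (TensorProduct.assoc k V B B).toLinearMap := by
          rw [hσ.act_assoc]; rfl
      _ = σ' ∘ₗ (π.rTensor B ∘ₗ μ.lTensor V) ∘ₗ (TensorProduct.assoc k V B B).toLinearMap := by
          rw [← hπσ]; rfl
      _ = σ' ∘ₗ μ.lTensor Q ∘ₗ (TensorProduct.assoc k Q B B).toLinearMap
            ∘ₗ (π.rTensor B).rTensor B := by
          rw [rTensor_comp_lTensor, ← lTensor_comp_rTensor, hassoc]; rfl

end Pushforward

section Quotient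

variable {k C V B : Type u} [Field k] [AddCommGroup C] [Module k C]
  [AddCommGroup V] [Module k V] [AddCommGroup B] [Module k B]

noncomputable def IsSubcomod.quotientCoact {ρ : V →ₗ[k] C ⊗[k] V} {W : Submodule k V}
    (h : IsSubcomod k ρ W) : V ⧸ W →ₗ[k] C ⊗[k] (V ⧸ W) :=
  W.liftQ (W.mkQ.lTensor C ∘ₗ ρ) (isSubcomod_iff_mkQ.1 h)

theorem IsSubcomod.quotientCoact_comp_mkQ {ρ : V →ₗ[k] C ⊗[k] V} {W : Submodule k V}
    (h : IsSubcomod k ρ W) : h.quotientCoact ∘ₗ W.mkQ = W.mkQ.lTensor C ∘ₗ ρ :=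
  W.liftQ_mkQ _ _

noncomputable def quotientAct (σ : V ⊗[k] B →ₗ[k] V) (W : Submodule k V)
    (h : ∀ w ∈ W, ∀ b : B, σ (w ⊗ₜ b) ∈ W) : (V ⧸ W) ⊗[k] B →ₗ[k] V ⧸ W :=
  lift <| W.liftQ (curry (W.mkQ ∘ₗ σ)) fun w hw => by
    ext b
    simpa using h w hw b

theorem quotientAct_comp_rTensor_mkQ (σ : V ⊗[k] B →ₗ[k] V) (W : Submodule k V)
    (h : ∀ w ∈ W, ∀ b : B, σ (w ⊗ₜ b) ∈ W) :
    quotientAct σ W h ∘ₗ W.mkQ.rTensor B = W.mkQ ∘ₗ σ := by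
  ext
  rfl

end Quotient

section HopfSubmodule

variable {k C D B V Q : Type u} [Field k] [AddCommGroup C] [Module k C]
  [AddCommGroup D] [Module k D] [AddCommGroup B] [Module k B]
  [AddCommGroup V] [Module k V] [AddCommGroup Q] [Module k Q]

structure IsHopfSubmodule (ρH : V →ₗ[k] C ⊗[k] V) (ρA : V →ₗ[k] D ⊗[k] V)
    (σ : V ⊗[k] B →ₗ[k] V) (W : Submodule k V) : Prop where
  isSubcomodH : IsSubcomod k ρH W
  isSubcomodA : IsSubcomod k ρA W
  act_mem : ∀ w ∈ W, ∀ b : B, σ (w ⊗ₜ b) ∈ W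

variable {ρH : V →ₗ[k] C ⊗[k] V} {ρA : V →ₗ[k] D ⊗[k] V} {σ : V ⊗[k] B →ₗ[k] V}

theorem isHopfSubmodule_bot : IsHopfSubmodule ρH ρA σ ⊥ :=
  ⟨isSubcomod_bot ρH, isSubcomod_bot ρA, by simp⟩

theorem IsHopfSubmodule.sSup_of_directedOn {s : Set (Submodule k V)} (hne : s.Nonempty)
    (hdir : DirectedOn (· ≤ ·) s) (h : ∀ W ∈ s, IsHopfSubmodule ρH ρA σ W) :
    IsHopfSubmodule ρH ρA σ (sSup s) where
  isSubcomodH := isSubcomod_sSup fun W hW => (h W hW).isSubcomodH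
  isSubcomodA := isSubcomod_sSup fun W hW => (h W hW).isSubcomodA
  act_mem w hw b := by
    obtain ⟨W, hW, hwW⟩ := (Submodule.mem_sSup_of_directed hne hdir).1 hw
    exact le_sSup hW ((h W hW).act_mem w hwW b)

theorem IsHopfSubmodule.comap {ρH' : Q →ₗ[k] C ⊗[k] Q} {ρA' : Q →ₗ[k] D ⊗[k] Q}
    {σ' : Q ⊗[k] B →ₗ[k] Q} {π : V →ₗ[k] Q} (hH : ρH' ∘ₗ π = π.lTensor C ∘ₗ ρH)
    (hA : ρA' ∘ₗ π = π.lTensor D ∘ₗ ρA) (hσ : σ' ∘ₗ π.rTensor B = π ∘ₗ σ)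
    {W : Submodule k Q} (hW : IsHopfSubmodule ρH' ρA' σ' W) :
    IsHopfSubmodule ρH ρA σ (W.comap π) where
  isSubcomodH := hW.isSubcomodH.comap hH
  isSubcomodA := hW.isSubcomodA.comap hA
  act_mem w hw b := by
    have := hW.act_mem _ hw b
    rwa [← rTensor_tmul, ← comp_apply, hσ, comp_apply] at this

end HopfSubmodule

section ActionOnSubmodules

variable {k V Q B : Type u} [Field k] [AddCommGroup V] [Module k V] [AddCommGroup Q] [Module k Q]
  [AddCommGroup B] [Module k B] (σ : V ⊗[k] B →ₗ[k] V)

theorem comp_rTensor_inclusion {X Y : Submodule k V} (h : X ≤ Y) :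
    (σ ∘ₗ Y.subtype.rTensor B) ∘ₗ (Submodule.inclusion h).rTensor B
      = σ ∘ₗ X.subtype.rTensor B := by
  rw [comp_assoc, ← rTensor_comp, Submodule.subtype_comp_inclusion]

theorem range_comp_rTensor_subtype_mono {X Y : Submodule k V} (h : X ≤ Y) :
    range (σ ∘ₗ X.subtype.rTensor B) ≤ range (σ ∘ₗ Y.subtype.rTensor B) := by
  rw [← comp_rTensor_inclusion σ h]
  exact range_comp_le_range _ _

theorem exists_rTensor_inclusion_sup_eq (X Y : Submodule k V) (t : ↥(X ⊔ Y) ⊗[k] B) :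
    ∃ t₁ t₂, (Submodule.inclusion le_sup_left).rTensor B t₁
      + (Submodule.inclusion le_sup_right).rTensor B t₂ = t := by
  induction t using TensorProduct.induction_on with
  | zero => exact ⟨0, 0, by simp⟩
  | tmul z b =>
    obtain ⟨x, hx, y, hy, hxy⟩ := Submodule.mem_sup.1 z.2
    refine ⟨⟨x, hx⟩ ⊗ₜ b, ⟨y, hy⟩ ⊗ₜ b, ?_⟩
    rw [rTensor_tmul, rTensor_tmul, ← add_tmul]
    congr
    exact Subtype.ext hxy
  | add t t' h h' =>
    obtain ⟨t₁, t₂, rfl⟩ := h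
    obtain ⟨t₁', t₂', rfl⟩ := h'
    exact ⟨t₁ + t₁', t₂ + t₂', by rw [map_add, map_add]; abel⟩

theorem exists_rTensor_inclusion_eq_of_directedOn {s : Set (Submodule k V)} (hne : s.Nonempty)
    (hdir : DirectedOn (· ≤ ·) s) (t : ↥(sSup s) ⊗[k] B) :
    ∃ X, ∃ hX : X ∈ s, ∃ t' : ↥X ⊗[k] B, (Submodule.inclusion (le_sSup hX)).rTensor B t' = t := by
  induction t using TensorProduct.induction_on with
  | zero =>
    obtain ⟨X, hX⟩ := hne
    exact ⟨X, hX, 0, map_zero _⟩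
  | tmul x b =>
    obtain ⟨X, hX, hxX⟩ := (Submodule.mem_sSup_of_directed hne hdir).1 x.2
    exact ⟨X, hX, ⟨x, hxX⟩ ⊗ₜ b, rfl⟩
  | add t t' h h' =>
    obtain ⟨X₁, hX₁, t₁, rfl⟩ := h
    obtain ⟨X₂, hX₂, t₂, rfl⟩ := h'
    obtain ⟨X, hX, h₁, h₂⟩ := hdir X₁ hX₁ X₂ hX₂
    refine ⟨X, hX,
      (Submodule.inclusion h₁).rTensor B t₁ + (Submodule.inclusion h₂).rTensor B t₂, ?_⟩
    rw [map_add, ← comp_apply, ← comp_apply (g := (Submodule.inclusion h₂).rTensor B),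
      ← rTensor_comp, ← rTensor_comp]
    rfl

theorem range_comp_rTensor_subtype_sup (X Y : Submodule k V) :
    range (σ ∘ₗ (X ⊔ Y).subtype.rTensor B)
      = range (σ ∘ₗ X.subtype.rTensor B) ⊔ range (σ ∘ₗ Y.subtype.rTensor B) := by
  refine le_antisymm ?_ (sup_le (range_comp_rTensor_subtype_mono σ le_sup_left)
    (range_comp_rTensor_subtype_mono σ le_sup_right))
  rintro _ ⟨t, rfl⟩
  obtain ⟨t₁, t₂, rfl⟩ := exists_rTensor_inclusion_sup_eq X Y t
  rw [map_add, ← comp_apply, comp_rTensor_inclusion, ← comp_apply, comp_rTensor_inclusion]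
  exact Submodule.add_mem_sup (mem_range_self _ _) (mem_range_self _ _)

theorem range_comp_rTensor_subtype_sSup {s : Set (Submodule k V)} (hne : s.Nonempty)
    (hdir : DirectedOn (· ≤ ·) s) :
    range (σ ∘ₗ (sSup s).subtype.rTensor B)
      = sSup ((fun X => range (σ ∘ₗ X.subtype.rTensor B)) '' s) := by
  refine le_antisymm ?_ (sSup_le ?_)
  · rintro _ ⟨t, rfl⟩
    obtain ⟨X, hX, t', rfl⟩ := exists_rTensor_inclusion_eq_of_directedOn hne hdir t
    rw [← comp_apply, comp_rTensor_inclusion]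
    exact le_sSup (Set.mem_image_of_mem (fun X => range (σ ∘ₗ X.subtype.rTensor B)) hX)
      (mem_range_self _ _)
  · rintro _ ⟨X, hX, rfl⟩
    exact range_comp_rTensor_subtype_mono σ (le_sSup hX)

theorem injective_comp_rTensor_subtype_sSup {s : Set (Submodule k V)} (hne : s.Nonempty)
    (hdir : DirectedOn (· ≤ ·) s) (h : ∀ X ∈ s, Function.Injective (σ ∘ₗ X.subtype.rTensor B)) :
    Function.Injective (σ ∘ₗ (sSup s).subtype.rTensor B) := by
  refine (injective_iff_map_eq_zero _).2 fun t ht => ?_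
  obtain ⟨X, hX, t', rfl⟩ := exists_rTensor_inclusion_eq_of_directedOn hne hdir t
  rw [← comp_apply, comp_rTensor_inclusion] at ht
  rw [(injective_iff_map_eq_zero _).1 (h X hX) t' ht, map_zero]

variable {σ' : Q ⊗[k] B →ₗ[k] Q} {π : V →ₗ[k] Q}

theorem comp_comp_rTensor_subtype (hπσ : σ' ∘ₗ π.rTensor B = π ∘ₗ σ) (Y : Submodule k V) :
    π ∘ₗ σ ∘ₗ Y.subtype.rTensor B
      = (σ' ∘ₗ (Y.map π).subtype.rTensor B) ∘ₗ (π.submoduleMap Y).rTensor B := by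
  rw [← comp_assoc, ← hπσ, comp_assoc, comp_assoc, ← rTensor_comp, ← rTensor_comp]
  rfl

theorem map_range_comp_rTensor_subtype (hπσ : σ' ∘ₗ π.rTensor B = π ∘ₗ σ)
    (Y : Submodule k V) :
    (range (σ ∘ₗ Y.subtype.rTensor B)).map π = range (σ' ∘ₗ (Y.map π).subtype.rTensor B) := by
  rw [← range_comp, comp_comp_rTensor_subtype σ hπσ, range_comp_of_range_eq_top]
  exact range_eq_top.2 (rTensor_surjective _ (submoduleMap_surjective π Y))

theorem range_comp_rTensor_subtype_sup_eq_comap (hπσ : σ' ∘ₗ π.rTensor B = π ∘ₗ σ)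
    {X Y : Submodule k V} (hker : ker π = range (σ ∘ₗ X.subtype.rTensor B)) :
    range (σ ∘ₗ (X ⊔ Y).subtype.rTensor B)
      = (range (σ' ∘ₗ (Y.map π).subtype.rTensor B)).comap π := by
  rw [range_comp_rTensor_subtype_sup, ← map_range_comp_rTensor_subtype σ hπσ,
    Submodule.comap_map_eq, hker, sup_comm]

theorem injective_comp_rTensor_subtype_sup (hπσ : σ' ∘ₗ π.rTensor B = π ∘ₗ σ)
    {X Y : Submodule k V} (hker : ker π = range (σ ∘ₗ X.subtype.rTensor B))
    (hX : Function.Injective (σ ∘ₗ X.subtype.rTensor B)) (hY : Disjoint Y (ker π))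
    (hYπ : Function.Injective (σ' ∘ₗ (Y.map π).subtype.rTensor B)) :
    Function.Injective (σ ∘ₗ (X ⊔ Y).subtype.rTensor B) := by
  refine (injective_iff_map_eq_zero _).2 fun t ht => ?_
  obtain ⟨t₁, t₂, rfl⟩ := exists_rTensor_inclusion_sup_eq X Y t
  rw [map_add, ← comp_apply, comp_rTensor_inclusion, ← comp_apply, comp_rTensor_inclusion] at ht
  have hπ₁ : π ((σ ∘ₗ X.subtype.rTensor B) t₁) = 0 := by
    rw [← mem_ker, hker]
    exact mem_range_self _ _
  have hπY : Function.Injective ((π.submoduleMap Y).rTensor B) := by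
    refine Module.Flat.rTensor_preserves_injective_linearMap _ ?_
    rwa [← ker_eq_bot, ker_submoduleMap, ← Submodule.disjoint_iff_comap_eq_bot]
  have ht₂ : t₂ = 0 := by
    refine (injective_iff_map_eq_zero ((σ' ∘ₗ (Y.map π).subtype.rTensor B)
      ∘ₗ (π.submoduleMap Y).rTensor B)).1 (hYπ.comp hπY) t₂ ?_
    have hπt := congrArg π ht
    rwa [map_add, hπ₁, zero_add, map_zero, ← comp_apply (f := π),
      comp_comp_rTensor_subtype σ hπσ] at hπt
  rw [ht₂, map_zero, add_zero] at ht ⊢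
  rw [(injective_iff_map_eq_zero _).1 hX t₁ ht, map_zero]

end ActionOnSubmodules

section FreeGenerator

variable {k C D B V : Type u} [Field k] [AddCommGroup C] [Module k C]
  [AddCommGroup D] [Module k D] [AddCommGroup B] [Module k B] [AddCommGroup V] [Module k V]

structure IsFreeHopfGenerator (ρH : V →ₗ[k] C ⊗[k] V) (ρA : V →ₗ[k] D ⊗[k] V)
    (σ : V ⊗[k] B →ₗ[k] V) (X : Submodule k V) : Prop where
  isSubcomod : IsSubcomod k ρH X
  injective : Function.Injective (σ ∘ₗ X.subtype.rTensor B)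
  isHopfSubmodule_range : IsHopfSubmodule ρH ρA σ (range (σ ∘ₗ X.subtype.rTensor B))

variable {ρH : V →ₗ[k] C ⊗[k] V} {ρA : V →ₗ[k] D ⊗[k] V} {σ : V ⊗[k] B →ₗ[k] V}

theorem isFreeHopfGenerator_bot : IsFreeHopfGenerator ρH ρA σ ⊥ where
  isSubcomod := isSubcomod_bot ρH
  injective := Function.injective_of_subsingleton _
  isHopfSubmodule_range := by
    rw [range_eq_bot.2 (Subsingleton.elim _ 0)]
    exact isHopfSubmodule_bot

theorem IsFreeHopfGenerator.sSup_of_isChain {c : Set (Submodule k V)}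
    (h : ∀ X ∈ c, IsFreeHopfGenerator ρH ρA σ X) (hchain : IsChain (· ≤ ·) c) (hne : c.Nonempty) :
    IsFreeHopfGenerator ρH ρA σ (sSup c) where
  isSubcomod := isSubcomod_sSup fun X hX => (h X hX).isSubcomod
  injective := injective_comp_rTensor_subtype_sSup σ hne hchain.directedOn
    fun X hX => (h X hX).injective
  isHopfSubmodule_range := by
    rw [range_comp_rTensor_subtype_sSup σ hne hchain.directedOn]
    refine IsHopfSubmodule.sSup_of_directedOn (hne.image _) ?_ ?_
    · exact (hchain.image_of_map_rel _ _ _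
        fun _ _ h => range_comp_rTensor_subtype_mono σ h).directedOn
    · rintro _ ⟨X, hX, rfl⟩
      exact (h X hX).isHopfSubmodule_range

end FreeGenerator

namespace BHA

section HopfModule

variable {k H A : Type u} [Field k] [Ring H] [HopfAlgebra k H] [AddCommGroup A] [Module k A]
  {S : BHA k H A} {K : Submodule k A} {mulK : ↥K ⊗[k] ↥K →ₗ[k] ↥K} {oneK : ↥K}
  {comulK : ↥K →ₗ[k] A ⊗[k] ↥K} {coactK : ↥K →ₗ[k] H ⊗[k] ↥K}
  {V Q : Type u} [AddCommGroup V] [Module k V] [AddCommGroup Q] [Module k Q]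
  {ρH : V →ₗ[k] H ⊗[k] V} {ρA : V →ₗ[k] A ⊗[k] V} {σ : V ⊗[k] ↥K →ₗ[k] V}

theorem IsHopfModule.of_surjective (hm : S.IsHopfModule K mulK oneK comulK coactK ρH ρA σ)
    {ρH' : Q →ₗ[k] H ⊗[k] Q} {ρA' : Q →ₗ[k] A ⊗[k] Q} {σ' : Q ⊗[k] ↥K →ₗ[k] Q}
    {π : V →ₗ[k] Q} (hπ : Function.Surjective π) (hH : ρH' ∘ₗ π = π.lTensor H ∘ₗ ρH)
    (hA : ρA' ∘ₗ π = π.lTensor A ∘ₗ ρA) (hσ : σ' ∘ₗ π.rTensor ↥K = π ∘ₗ σ) :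
    S.IsHopfModule K mulK oneK comulK coactK ρH' ρA' σ' where
  comodH := hm.comodH.of_surjective hπ hH
  comodA := hm.comodA.of_surjective hπ hA
  modK := hm.modK.of_surjective hπ hσ
  colinearA := by
    refine (cancel_right hπ).1 ?_
    calc (diagCoact k S.coact ρH' ∘ₗ ρA') ∘ₗ π
        = (diagCoact k S.coact ρH' ∘ₗ π.lTensor A) ∘ₗ ρA := by
          rw [comp_assoc, hA]; rfl
      _ = ((π.lTensor A).lTensor H ∘ₗ ρA.lTensor H) ∘ₗ ρH := by
          rw [diagCoact_comp_lTensor_s12 _ hH, comp_assoc, hm.colinearA]; rfl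
      _ = (ρA'.lTensor H ∘ₗ ρH') ∘ₗ π := by
          rw [← lTensor_comp, ← hA, lTensor_comp]
          simp only [comp_assoc, hH]
  colinearK := by
    refine (cancel_right (rTensor_surjective _ hπ)).1 ?_
    calc (ρH' ∘ₗ σ') ∘ₗ π.rTensor ↥K = (ρH' ∘ₗ π) ∘ₗ σ := by rw [comp_assoc, hσ]; rfl
      _ = (π ∘ₗ σ).lTensor H ∘ₗ diagCoact k ρH coactK := by
          rw [hH, comp_assoc, hm.colinearK, lTensor_comp]; rfl
      _ = (σ'.lTensor H ∘ₗ diagCoact k ρH' coactK) ∘ₗ π.rTensor ↥K := by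
          rw [comp_assoc, diagCoact_comp_rTensor _ hH, ← hσ, lTensor_comp]; rfl
  Klinear := by
    refine (cancel_right (rTensor_surjective _ hπ)).1 ?_
    calc (ρA' ∘ₗ σ') ∘ₗ π.rTensor ↥K = (ρA' ∘ₗ π) ∘ₗ σ := by rw [comp_assoc, hσ]; rfl
      _ = π.lTensor A ∘ₗ halfBraidedAction k S.mul S.act ρH σ comulK ∘ₗ ρA.rTensor ↥K := by
          rw [hA, comp_assoc, hm.Klinear]
      _ = (halfBraidedAction k S.mul S.act ρH' σ' comulK ∘ₗ (π.lTensor A).rTensor ↥K)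
            ∘ₗ ρA.rTensor ↥K := by
          rw [halfBraidedAction_comp_rTensor_lTensor _ _ _ hH hσ]; rfl
      _ = (halfBraidedAction k S.mul S.act ρH' σ' comulK ∘ₗ ρA'.rTensor ↥K) ∘ₗ π.rTensor ↥K := by
          rw [comp_assoc, comp_assoc, ← rTensor_comp, ← rTensor_comp, hA]

theorem IsHopfModule.quotient (hm : S.IsHopfModule K mulK oneK comulK coactK ρH ρA σ)
    {W : Submodule k V} (hW : IsHopfSubmodule ρH ρA σ W) :
    S.IsHopfModule K mulK oneK comulK coactK hW.isSubcomodH.quotientCoact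
      hW.isSubcomodA.quotientCoact (quotientAct σ W hW.act_mem) :=
  hm.of_surjective W.mkQ_surjective hW.isSubcomodH.quotientCoact_comp_mkQ
    hW.isSubcomodA.quotientCoact_comp_mkQ (quotientAct_comp_rTensor_mkQ σ W hW.act_mem)

theorem IsHopfModule.exists_isFreeHopfGenerator_range_not_le
    (hcss : CosemisimpleCoalg k (Coalgebra.comul (R := k) (A := H))
      (Coalgebra.counit (R := k) (A := H)))
    (hloc : ∀ (V : Type u) [AddCommGroup V] [Module k V]
      (ρH : V →ₗ[k] H ⊗[k] V) (ρA : V →ₗ[k] A ⊗[k] V) (σ : V ⊗[k] ↥K →ₗ[k] V),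
      S.IsHopfModule K mulK oneK comulK coactK ρH ρA σ → Nontrivial V →
      ∃ W : Submodule k V, W ≠ ⊥ ∧ IsSubcomod k ρH W ∧ IsSubcomod k ρA W ∧
        (∀ w ∈ W, ∀ c : ↥K, σ (w ⊗ₜ c) ∈ W) ∧
        ∃ X : Submodule k V, X ≤ W ∧ IsSubcomod k ρH X ∧
          Function.Injective (σ ∘ₗ X.subtype.rTensor ↥K) ∧
          LinearMap.range (σ ∘ₗ X.subtype.rTensor ↥K) = W)
    (hm : S.IsHopfModule K mulK oneK comulK coactK ρH ρA σ) {X : Submodule k V}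
    (hX : IsFreeHopfGenerator ρH ρA σ X) (hne : range (σ ∘ₗ X.subtype.rTensor ↥K) ≠ ⊤) :
    ∃ X', IsFreeHopfGenerator ρH ρA σ X' ∧ X ≤ X' ∧
      ¬ range (σ ∘ₗ X'.subtype.rTensor ↥K) ≤ range (σ ∘ₗ X.subtype.rTensor ↥K) := by
  set W := range (σ ∘ₗ X.subtype.rTensor ↥K)
  have hW := hX.isHopfSubmodule_range
  obtain ⟨W₁, hW₁, hW₁H, hW₁A, hW₁K, X₁, -, hX₁, hX₁inj, hX₁W₁⟩ :=
    hloc _ _ _ _ (hm.quotient hW) (Submodule.Quotient.nontrivial_iff.2 hne)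
  have hH := hW.isSubcomodH.quotientCoact_comp_mkQ
  have hσ := quotientAct_comp_rTensor_mkQ σ W hW.act_mem
  obtain ⟨Y, hY, hYW, rfl⟩ := hcss.exists_isSubcomod_disjoint_ker_map_eq hm.comodH
    W.mkQ_surjective hH (by rw [Submodule.ker_mkQ]; exact hW.isSubcomodH) hX₁
  have hrange : range (σ ∘ₗ (X ⊔ Y).subtype.rTensor ↥K) = W₁.comap W.mkQ := by
    rw [range_comp_rTensor_subtype_sup_eq_comap σ hσ (Submodule.ker_mkQ W), hX₁W₁]
  refine ⟨X ⊔ Y, ⟨hX.isSubcomod.sup hY, injective_comp_rTensor_subtype_sup σ hσ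
    (Submodule.ker_mkQ W) hX.injective hYW hX₁inj, ?_⟩, le_sup_left, fun hle => hW₁ ?_⟩
  · rw [hrange]
    exact IsHopfSubmodule.comap hH hW.isSubcomodA.quotientCoact_comp_mkQ hσ ⟨hW₁H, hW₁A, hW₁K⟩
  · rw [hrange] at hle
    rw [← Submodule.map_comap_eq_of_surjective W.mkQ_surjective W₁, eq_bot_iff,
      ← Submodule.mkQ_map_self W]
    exact Submodule.map_mono hle

end HopfModule

end BHA

theorem all_hopfModules_KFree_of_local_freeness_general
    {k H A : Type u} [Field k] [Ring H] [HopfAlgebra k H]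
    [AddCommGroup A] [Module k A] (S : BHA k H A)
    (hcss : CosemisimpleCoalg k (Coalgebra.comul (R := k) (A := H))
      (Coalgebra.counit (R := k) (A := H)))
    (K : Submodule k A)
    (mulK : ↥K ⊗[k] ↥K →ₗ[k] ↥K)
    (oneK : ↥K)
    (comulK : ↥K →ₗ[k] A ⊗[k] ↥K)
    (coactK : ↥K →ₗ[k] H ⊗[k] ↥K)
    -- every non-zero Hopf module contains a non-zero `K`-free Hopf submodule:
    (hloc : ∀ (V : Type u) [AddCommGroup V] [Module k V]
      (ρH : V →ₗ[k] H ⊗[k] V) (ρA : V →ₗ[k] A ⊗[k] V) (σ : V ⊗[k] ↥K →ₗ[k] V),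
      S.IsHopfModule K mulK oneK comulK coactK ρH ρA σ → Nontrivial V →
      ∃ W : Submodule k V, W ≠ ⊥ ∧ IsSubcomod k ρH W ∧ IsSubcomod k ρA W ∧
        (∀ w ∈ W, ∀ c : ↥K, σ (w ⊗ₜ c) ∈ W) ∧
        ∃ X : Submodule k V, X ≤ W ∧ IsSubcomod k ρH X ∧
          Function.Injective (σ ∘ₗ X.subtype.rTensor ↥K) ∧
          LinearMap.range (σ ∘ₗ X.subtype.rTensor ↥K) = W) :
    -- then every Hopf module is `K`-free in left `H`-comodules:
    ∀ (V : Type u) [AddCommGroup V] [Module k V]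
      (ρH : V →ₗ[k] H ⊗[k] V) (ρA : V →ₗ[k] A ⊗[k] V) (σ : V ⊗[k] ↥K →ₗ[k] V),
      S.IsHopfModule K mulK oneK comulK coactK ρH ρA σ →
      BHA.IsKFree K ρH σ := by
  intro V _ _ ρH ρA σ hm
  obtain ⟨X, -, hX⟩ := zorn_le_nonempty₀ {X | IsFreeHopfGenerator ρH ρA σ X}
    (fun c hc hchain Y hY => ⟨sSup c, .sSup_of_isChain hc hchain ⟨Y, hY⟩, fun _ => le_sSup⟩)
    ⊥ isFreeHopfGenerator_bot
  refine ⟨X, hX.prop.isSubcomod, hX.prop.injective, range_eq_top.1 (by_contra fun hne => ?_)⟩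
  obtain ⟨X', hX', hXX', hnle⟩ := hm.exists_isFreeHopfGenerator_range_not_le hcss hloc hX.prop hne
  exact hnle (range_comp_rTensor_subtype_mono σ (hX.2 hX' hXX'))

/-- Over a cosemisimple Hopf algebra `H`: if every non-zero Hopf module
in `^A(^H 𝓜)_K` contains a non-zero Hopf submodule which is `K`-free in left
`H`-comodules, then every Hopf module in `^A(^H 𝓜)_K` is `K`-free in left
`H`-comodules. -/
theorem all_hopfModules_KFree_of_local_freeness
    {k H A : Type u} [Field k] [Ring H] [HopfAlgebra k H]
    [AddCommGroup A] [Module k A] (S : BHA k H A)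
    (hbij : Function.Bijective (HopfAlgebra.antipode (R := k) (A := H)))
    (hcss : CosemisimpleCoalg k (Coalgebra.comul (R := k) (A := H))
      (Coalgebra.counit (R := k) (A := H)))
    (K : Submodule k A) (hK : S.IsLeftCoidealSubalgebra K)
    (mulK : ↥K ⊗[k] ↥K →ₗ[k] ↥K) (hmulK : S.RestrictsMul K mulK)
    (oneK : ↥K) (honeK : (oneK : A) = S.one)
    (comulK : ↥K →ₗ[k] A ⊗[k] ↥K) (hcomulK : S.RestrictsComul K comulK)
    (coactK : ↥K →ₗ[k] H ⊗[k] ↥K) (hcoactK : S.RestrictsCoact K coactK)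
    -- every non-zero Hopf module contains a non-zero `K`-free Hopf submodule:
    (hloc : ∀ (V : Type u) [AddCommGroup V] [Module k V]
      (ρH : V →ₗ[k] H ⊗[k] V) (ρA : V →ₗ[k] A ⊗[k] V) (σ : V ⊗[k] ↥K →ₗ[k] V),
      S.IsHopfModule K mulK oneK comulK coactK ρH ρA σ → Nontrivial V →
      ∃ W : Submodule k V, W ≠ ⊥ ∧ IsSubcomod k ρH W ∧ IsSubcomod k ρA W ∧
        (∀ w ∈ W, ∀ c : ↥K, σ (w ⊗ₜ c) ∈ W) ∧
        ∃ X : Submodule k V, X ≤ W ∧ IsSubcomod k ρH X ∧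
          Function.Injective (σ ∘ₗ X.subtype.rTensor ↥K) ∧
          LinearMap.range (σ ∘ₗ X.subtype.rTensor ↥K) = W) :
    -- then every Hopf module is `K`-free in left `H`-comodules:
    ∀ (V : Type u) [AddCommGroup V] [Module k V]
      (ρH : V →ₗ[k] H ⊗[k] V) (ρA : V →ₗ[k] A ⊗[k] V) (σ : V ⊗[k] ↥K →ₗ[k] V),
      S.IsHopfModule K mulK oneK comulK coactK ρH ρA σ →
      BHA.IsKFree K ρH σ :=
  all_hopfModules_KFree_of_local_freeness_general S hcss K mulK oneK comulK coactK hloc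
end
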